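/- arXiv:2012.03230 — 8 statements merged into one kernel-verified Lean document; each statement's English description precedes it below -/
import Mathlib

section
/- Let F be a field, let ι be a finite type with n elements, and for each i ∈ ι let A_i be a nonempty finite subset of F. Set S = ∑_i |A_i| and let t = max_i |A_i|, and assume t ≥ 2. Let P be a multivariate polynomial over F in variables indexed by ι of total degree d, assume S ≥ n + d, and assume that P is nonzero at some point of the grid. Then the number of grid points at which P evaluates to a nonzero value is at least t^((S - n - d)/(t - 1)) (real exponentiation). -/
/-! Dividing `P` by the polynomials `∏ a ∈ A i, (X i - C a)` with respect to the
degree-lexicographic order does not change its values on the grid and does not increase its total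
degree, so one may assume `degreeOf i P < #(A i)` for all `i`. Then induct on the number of
variables: viewing `P` as a polynomial of degree `k < #(A 0)` in `X 0` with leading coefficient `c`,
every point of the smaller grid where `c` does not vanish extends to at least `#(A 0) - k`
non-vanishing points of `P`, and Bernoulli's inequality `t ^ ((y - 1) / (t - 1)) ≤ y` for
`1 ≤ y ≤ t` turns the factor `y = #(A 0) - k` into the power of `t` that the exponent
`(S - n - d) / (t - 1)` asks for. -/

open MvPolynomial Finset

theorem Real.rpow_sub_one_div_sub_one_le {t y : ℝ} (ht : 1 < t) (hy : 1 ≤ y) (hyt : y ≤ t) :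
    t ^ ((y - 1) / (t - 1)) ≤ y := by
  have ht' : 0 < t - 1 := sub_pos.2 ht
  calc t ^ ((y - 1) / (t - 1)) = (1 + (t - 1)) ^ ((y - 1) / (t - 1)) := by rw [add_sub_cancel]
    _ ≤ 1 + (y - 1) / (t - 1) * (t - 1) :=
      rpow_one_add_le_one_add_mul_self (by linarith) (by bound)
        ((div_le_one ht').2 (by linarith))
    _ = y := by field_simp; ring

theorem Polynomial.card_sub_natDegree_le_card_filter_eval_ne_zero {R : Type*} [CommRing R]
    [IsDomain R] [DecidableEq R] {f : Polynomial R} (hf : f ≠ 0) (B : Finset R) :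
    #B - f.natDegree ≤ #{b ∈ B | f.eval b ≠ 0} := by
  have hroots : #{b ∈ B | f.eval b = 0} ≤ f.natDegree :=
    Polynomial.card_le_degree_of_subset_roots fun b hb ↦ by
      simpa [Polynomial.mem_roots hf] using (mem_filter.1 hb).2
  have := card_filter_add_card_filter_not (s := B) (fun b ↦ f.eval b = 0)
  simp only [ne_eq]
  omega

theorem Finset.card_filter_piFinset_eq_sum_card_filter_cons {n : ℕ} {α : Type*}
    (S : Fin (n + 1) → Finset α) (p : (Fin (n + 1) → α) → Prop) [DecidablePred p] :
    #{x ∈ Fintype.piFinset S | p x} =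
      ∑ y ∈ Fintype.piFinset (Fin.tail S), #{b ∈ S 0 | p (Fin.cons b y)} := by
  have hS := filter_piFinset_eq_map_consEquiv S fun _ ↦ True
  simp only [filter_true] at hS
  rw [hS, filter_map, card_map, card_filter, sum_product_right]
  simp_rw [card_filter]
  rfl

namespace MvPolynomial

open MonomialOrder

variable {σ R : Type*} [CommRing R]

theorem degLex_degree_prod_X_sub_C [Nontrivial R] [LinearOrder σ] [WellFoundedGT σ] (i : σ)
    (s : Finset R) :
    degLex.degree (∏ r ∈ s, (X i - C r) : MvPolynomial σ R) = Finsupp.single i #s := by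
  rw [degLex.degree_prod_of_regular fun r _ ↦ by
    rw [(degLex.monic_X_sub_C i r).leadingCoeff_eq_one]; exact isRegular_one]
  simp [degLex.degree_X_sub_C]

theorem exists_degreeOf_lt_card_eval_eq [Nontrivial R] [Finite σ] (S : σ → Finset R)
    (hS : ∀ i, (S i).Nonempty) (f : MvPolynomial σ R) :
    ∃ r : MvPolynomial σ R, r.totalDegree ≤ f.totalDegree ∧ (∀ i, r.degreeOf i < #(S i)) ∧
      ∀ x : σ → R, (∀ i, x i ∈ S i) → eval x r = eval x f := by
  let : LinearOrder σ := WellOrderingRel.isWellOrder.linearOrder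
  set b : σ → MvPolynomial σ R := fun i ↦ ∏ s ∈ S i, (X i - C s)
  obtain ⟨g, r, hf, hg, hr⟩ := degLex.div (b := b)
    (fun i ↦ (Monic.prod fun s _ ↦ degLex.monic_X_sub_C (R := R) i s).leadingCoeff_eq_one ▸
      isUnit_one) f
  have hcomb : Finsupp.linearCombination (MvPolynomial σ R) b g = ∑ i ∈ g.support, b i * g i := by
    simp [Finsupp.linearCombination_apply, Finsupp.sum, mul_comm]
  rw [hcomb] at hf
  refine ⟨r, ?_, fun i ↦ ?_, fun x hx ↦ ?_⟩
  · apply degLex_totalDegree_monotone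
    rw [eq_sub_of_add_eq' hf.symm]
    refine degLex.degree_sub_le.trans (sup_le le_rfl (degLex.degree_sum_le.trans ?_))
    exact Finset.sup_le fun i _ ↦ hg i
  · rw [degreeOf_lt_iff (hS i).card_pos]
    intro m hm
    simpa [b, degLex_degree_prod_X_sub_C, Finsupp.single_le_iff] using hr m hm i
  · have hb : ∀ i, eval x (b i) = 0 := fun i ↦ by
      simpa [b, eval_prod] using prod_eq_zero (hx i) (sub_self (x i))
    simp [hf, hb]

theorem card_sub_degreeOf_mul_card_le_card_filter_eval_ne_zero [IsDomain R] [DecidableEq R]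
    {n : ℕ} (A : Fin (n + 1) → Finset R) (P : MvPolynomial (Fin (n + 1)) R) :
    (#(A 0) - P.degreeOf 0) *
        #{y ∈ Fintype.piFinset (Fin.tail A) | eval y (finSuccEquiv R n P).leadingCoeff ≠ 0} ≤
      #{x ∈ Fintype.piFinset A | eval x P ≠ 0} := by
  set q := finSuccEquiv R n P
  have hfiber : ∀ y, eval y q.leadingCoeff ≠ 0 →
      #(A 0) - P.degreeOf 0 ≤ #{b ∈ A 0 | eval (Fin.cons b y) P ≠ 0} := fun y hy ↦ by
    have hdeg : (q.map (eval y)).natDegree = P.degreeOf 0 := by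
      rw [Polynomial.natDegree_map_of_leadingCoeff_ne_zero _ hy, natDegree_finSuccEquiv]
    have hne : q.map (eval y) ≠ 0 := fun h ↦ hy <| by
      simpa [h] using (Polynomial.coeff_map (p := q) (eval y) q.natDegree).symm
    simpa only [eval_eq_eval_mv_eval', hdeg] using
      Polynomial.card_sub_natDegree_le_card_filter_eval_ne_zero hne (A 0)
  rw [card_filter_piFinset_eq_sum_card_filter_cons, mul_comm, ← smul_eq_mul, ← sum_const]
  calc _ ≤ ∑ y ∈ Fintype.piFinset (Fin.tail A) with eval y q.leadingCoeff ≠ 0,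
        #{b ∈ A 0 | eval (Fin.cons b y) P ≠ 0} := sum_le_sum fun y hy ↦ hfiber y (mem_filter.1 hy).2
    _ ≤ _ := sum_le_sum_of_subset (filter_subset _ _)

theorem exists_eval_ne_zero_of_degreeOf_lt_card [IsDomain R] [Finite σ] {P : MvPolynomial σ R}
    (hP : P ≠ 0) (S : σ → Finset R) (hdeg : ∀ i, P.degreeOf i < #(S i)) :
    ∃ x : σ → R, (∀ i, x i ∈ S i) ∧ eval x P ≠ 0 := by
  by_contra! h
  exact hP (eq_zero_of_eval_zero_at_prod_finset P S hdeg h)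

theorem rpow_le_card_filter_eval_ne_zero_of_degreeOf_lt_fin [IsDomain R] [DecidableEq R]
    {t : ℝ} (ht : 1 < t) :
    ∀ {n : ℕ} (A : Fin n → Finset R), (∀ i, (#(A i) : ℝ) ≤ t) →
      ∀ P : MvPolynomial (Fin n) R, P ≠ 0 → (∀ i, P.degreeOf i < #(A i)) →
      t ^ ((∑ i, (#(A i) : ℝ) - n - P.totalDegree) / (t - 1)) ≤
        #{x ∈ Fintype.piFinset A | eval x P ≠ 0}
  | 0, A, _, P, hP, hdeg => by
    obtain ⟨x, hxA, hx⟩ := exists_eval_ne_zero_of_degreeOf_lt_card hP A hdeg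
    have hpos : 0 < #{x ∈ Fintype.piFinset A | eval x P ≠ 0} :=
      card_pos.2 ⟨x, mem_filter.2 ⟨Fintype.mem_piFinset.2 hxA, hx⟩⟩
    calc t ^ ((∑ i, (#(A i) : ℝ) - (0 : ℕ) - P.totalDegree) / (t - 1)) ≤ 1 := by
          refine Real.rpow_le_one_of_one_le_of_nonpos ht.le (div_nonpos_of_nonpos_of_nonneg ?_ ?_)
          · simp
          · linarith
      _ ≤ _ := by exact_mod_cast hpos
  | n + 1, A, hAt, P, hP, hdeg => by
    set q := finSuccEquiv R n P
    set k := P.degreeOf 0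
    have hc : q.leadingCoeff ≠ 0 := by simpa [q] using hP
    have hcdeg : q.leadingCoeff.totalDegree + k ≤ P.totalDegree := by
      rw [show k = q.natDegree from (natDegree_finSuccEquiv P).symm]
      exact totalDegree_coeff_finSuccEquiv_add_le P _ hc
    have IH := rpow_le_card_filter_eval_ne_zero_of_degreeOf_lt_fin ht (Fin.tail A)
      (fun i ↦ hAt _) q.leadingCoeff hc
      (fun j ↦ (degreeOf_coeff_finSuccEquiv P j _).trans_lt (hdeg j.succ))
    have hk : ((#(A 0) - k : ℕ) : ℝ) = #(A 0) - k := Nat.cast_sub (hdeg 0).le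
    have hkA : (k : ℝ) + 1 ≤ #(A 0) := by exact_mod_cast hdeg 0
    have hbernoulli := Real.rpow_sub_one_div_sub_one_le ht (y := #(A 0) - k) (by linarith)
      (by linarith [hAt 0, (Nat.cast_nonneg k : (0 : ℝ) ≤ k)])
    have hexp : (∑ i, (#(A i) : ℝ) - (n + 1 : ℕ) - P.totalDegree) / (t - 1) ≤
        (∑ i, (#(Fin.tail A i) : ℝ) - n - q.leadingCoeff.totalDegree) / (t - 1) +
          (#(A 0) - k - 1) / (t - 1) := by
      rw [← add_div, Fin.sum_univ_succ]
      gcongr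
      have : (q.leadingCoeff.totalDegree : ℝ) + k ≤ P.totalDegree := by exact_mod_cast hcdeg
      simp only [Fin.tail]
      push_cast
      linarith
    calc _ ≤ t ^ ((∑ i, (#(Fin.tail A i) : ℝ) - n - q.leadingCoeff.totalDegree) / (t - 1) +
          (#(A 0) - k - 1) / (t - 1)) := Real.rpow_le_rpow_of_exponent_le ht.le hexp
      _ = t ^ ((∑ i, (#(Fin.tail A i) : ℝ) - n - q.leadingCoeff.totalDegree) / (t - 1)) *
          t ^ ((#(A 0) - k - 1) / (t - 1)) := Real.rpow_add (by linarith) _ _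
      _ ≤ #{y ∈ Fintype.piFinset (Fin.tail A) | eval y q.leadingCoeff ≠ 0} * (#(A 0) - k) := by
          gcongr
      _ ≤ #{x ∈ Fintype.piFinset A | eval x P ≠ 0} := by
          rw [← hk, mul_comm]
          exact_mod_cast card_sub_degreeOf_mul_card_le_card_filter_eval_ne_zero A P

theorem card_filter_eval_rename_ne_zero [DecidableEq R] {τ : Type*} [Fintype σ] [DecidableEq σ]
    [Fintype τ] [DecidableEq τ] (e : σ ≃ τ) (A : σ → Finset R) (P : MvPolynomial σ R) :
    #{x ∈ Fintype.piFinset fun j ↦ A (e.symm j) | eval x (rename e P) ≠ 0} =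
      #{x ∈ Fintype.piFinset A | eval x P ≠ 0} := by
  refine card_nbij' (· ∘ e) (· ∘ e.symm) (fun x hx ↦ ?_) (fun x hx ↦ ?_)
    (fun x _ ↦ by ext; simp) (fun x _ ↦ by ext; simp)
  · simp only [mem_coe, mem_filter, Fintype.mem_piFinset, eval_rename] at hx ⊢
    exact ⟨fun i ↦ by simpa using hx.1 (e i), hx.2⟩
  · simp only [mem_coe, mem_filter, Fintype.mem_piFinset, eval_rename] at hx ⊢
    exact ⟨fun j ↦ hx.1 (e.symm j), by simpa [Function.comp_def] using hx.2⟩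

theorem rpow_le_card_filter_eval_ne_zero_of_degreeOf_lt [IsDomain R] [DecidableEq R]
    [Fintype σ] [DecidableEq σ] {t : ℝ} (ht : 1 < t) (A : σ → Finset R)
    (hAt : ∀ i, (#(A i) : ℝ) ≤ t) {P : MvPolynomial σ R} (hP : P ≠ 0)
    (hdeg : ∀ i, P.degreeOf i < #(A i)) :
    t ^ ((∑ i, (#(A i) : ℝ) - Fintype.card σ - P.totalDegree) / (t - 1)) ≤
      #{x ∈ Fintype.piFinset A | eval x P ≠ 0} := by
  set e := Fintype.equivFin σ
  have h := rpow_le_card_filter_eval_ne_zero_of_degreeOf_lt_fin ht (fun j ↦ A (e.symm j))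
    (fun j ↦ hAt _) (renameEquiv R e P) ((map_ne_zero_iff _ (renameEquiv R e).injective).2 hP)
    fun j ↦ by
      have h := degreeOf_rename_of_injective (p := P) e.injective (e.symm j)
      rw [e.apply_symm_apply] at h
      exact h ▸ hdeg _
  rwa [renameEquiv_apply, card_filter_eval_rename_ne_zero, ← renameEquiv_apply,
    totalDegree_renameEquiv, e.symm.sum_comp (fun i ↦ (#(A i) : ℝ))] at h

end MvPolynomial

theorem weak_alon_furedi_general {F : Type*} [Field F] [DecidableEq F]
    {ι : Type*} [Fintype ι] [DecidableEq ι]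
    (A : ι → Finset F)
    (S t : ℕ) (hS : S = ∑ i, (A i).card)
    (ht : t = Finset.univ.sup fun i => (A i).card) (ht2 : 2 ≤ t)
    (P : MvPolynomial ι F) (d : ℕ) (hd : d = P.totalDegree)
    (hex : ∃ x ∈ Fintype.piFinset A, eval x P ≠ 0) :
    (t : ℝ) ^ (((S : ℝ) - (Fintype.card ι : ℝ) - (d : ℝ)) / ((t : ℝ) - 1)) ≤
      (((Fintype.piFinset A).filter fun x => eval x P ≠ 0).card : ℝ) := by
  subst hS hd
  obtain ⟨x, hxA, hPx⟩ := hex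
  rw [Fintype.mem_piFinset] at hxA
  obtain ⟨r, hrP, hrA, hr⟩ :=
    exists_degreeOf_lt_card_eval_eq A (fun i ↦ ⟨x i, hxA i⟩) P
  have hr0 : r ≠ 0 := by
    rintro rfl
    exact hPx (by rw [← hr x hxA, map_zero])
  have ht1 : (1 : ℝ) < t := by exact_mod_cast ht2
  calc _ ≤ (t : ℝ) ^ ((∑ i, (#(A i) : ℝ) - Fintype.card ι - r.totalDegree) / (t - 1)) := by
        apply Real.rpow_le_rpow_of_exponent_le ht1.le
        push_cast
        gcongr
    _ ≤ #{x ∈ Fintype.piFinset A | eval x r ≠ 0} :=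
        rpow_le_card_filter_eval_ne_zero_of_degreeOf_lt ht1 A
          (fun i ↦ by rw [ht]; exact_mod_cast le_sup (f := fun i ↦ #(A i)) (mem_univ i)) hr0 hrA
    _ = #{x ∈ Fintype.piFinset A | eval x P ≠ 0} := by
        rw [filter_congr fun y hy ↦ by rw [hr y (Fintype.mem_piFinset.1 hy)]]

/-- Weak Alon–Füredi (Theorem 16 of the paper): if a multivariate polynomial `P` of total
degree `d` over a field `F` does not vanish identically on a grid `∏ i, A i` with
`S = ∑ i, |A i|`, `t = max_i |A i| ≥ 2` and `S ≥ n + d`, then the number of non-vanishing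
grid points is at least `t ^ ((S - n - d)/(t - 1))`. -/
theorem weak_alon_furedi {F : Type*} [Field F] [DecidableEq F]
    {ι : Type*} [Fintype ι] [DecidableEq ι]
    (A : ι → Finset F) (hA : ∀ i, (A i).Nonempty)
    (S t : ℕ) (hS : S = ∑ i, (A i).card)
    (ht : t = Finset.univ.sup fun i => (A i).card) (ht2 : 2 ≤ t)
    (P : MvPolynomial ι F) (d : ℕ) (hd : d = P.totalDegree)
    (hSnd : Fintype.card ι + d ≤ S)
    (hex : ∃ x ∈ Fintype.piFinset A, eval x P ≠ 0) :
    (t : ℝ) ^ (((S : ℝ) - (Fintype.card ι : ℝ) - (d : ℝ)) / ((t : ℝ) - 1)) ≤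
      (((Fintype.piFinset A).filter fun x => eval x P ≠ 0).card : ℝ) :=
  weak_alon_furedi_general A S t hS ht ht2 P d hd hex
end

section
/- Let F be a field, let ι be a finite type, and for each i ∈ ι let A_i be a nonempty finite subset of F. Let P be a multivariate polynomial over F in variables indexed by ι of total degree d, and suppose that P does not vanish at every point of the grid ∏_i A_i. Then the number of grid points at which P evaluates to a nonzero value is at least the minimum of ∏_i q_i taken over all integer vectors q : ι → ℕ satisfying 1 ≤ q_i ≤ |A_i| for all i and ∑_i q_i ≥ ∑_i |A_i| - d. -/
/-!
Dividing `P` by the monic polynomials `∏ a ∈ A i, (X i - C a)` for the degree lexicographic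
order changes neither its values on the grid nor raises its total degree, and leaves a remainder
of degree `< #(A i)` in each variable `X i`; so we may assume `P` has this form.
Then induct on the number of variables: write `P = L * X₀ ^ t + (lower powers of X₀)`.
The leading coefficient `L` has the same form in the remaining variables and is nonzero, so by
induction it is nonzero at `≥ ∏ q'` points of the smaller grid, with
`∑ q' ≥ ∑_{i > 0} #(A i) - deg L`. Above each such point `P` restricts to a univariate
polynomial of degree exactly `t < #(A 0)`, nonzero at `≥ #(A 0) - t` points of `A 0`.
Since `deg L + t ≤ deg P`, the vector `(#(A 0) - t, q')` is admissible.
-/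

open MvPolynomial Finset MonomialOrder

def AlonFuredi.Admissible {α ι : Type*} [Fintype ι] (A : ι → Finset α) (d : ℕ) (q : ι → ℕ) :
    Prop :=
  (∀ i, 1 ≤ q i ∧ q i ≤ #(A i)) ∧ ∑ i, (#(A i) : ℤ) - d ≤ ∑ i, (q i : ℤ)

namespace AlonFuredi.Admissible

variable {α : Type*} {d : ℕ}

theorem mono {ι : Type*} [Fintype ι] {A : ι → Finset α} {q : ι → ℕ} (hq : Admissible A d q)
    {d' : ℕ} (hd : d ≤ d') : Admissible A d' q :=
  ⟨hq.1, by have := hq.2; omega⟩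

theorem of_isEmpty {ι : Type*} [Fintype ι] [IsEmpty ι] (A : ι → Finset α) (q : ι → ℕ) :
    Admissible A d q :=
  ⟨isEmptyElim, by simp⟩

theorem cons {n t : ℕ} {A : Fin (n + 1) → Finset α} {q : Fin n → ℕ}
    (hq : Admissible (Fin.tail A) d q) (ht : t < #(A 0)) :
    Admissible A (d + t) (Fin.cons (#(A 0) - t) q) := by
  refine ⟨Fin.cases ⟨by simp; omega, by simp⟩ fun j => by simpa [Fin.tail] using hq.1 j,
    ?_⟩
  have := hq.2
  simp only [Fin.sum_univ_succ, Fin.cons_zero, Fin.cons_succ, Fin.tail] at this ⊢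
  push_cast [ht.le]
  omega

theorem comp_equiv {σ τ : Type*} [Fintype σ] [Fintype τ] {A : σ → Finset α} {q : τ → ℕ}
    (e : σ ≃ τ) (hq : Admissible (fun j => A (e.symm j)) d q) : Admissible A d (q ∘ e) := by
  refine ⟨fun i => by simpa using hq.1 (e i), ?_⟩
  rw [← Equiv.sum_comp e.symm fun i => (#(A i) : ℤ)]
  simpa [Equiv.sum_comp e fun j => (q j : ℤ)] using hq.2

end AlonFuredi.Admissible

open Polynomial in
theorem Polynomial.card_sub_natDegree_le_card_filter_eval_ne_zero_s1 {R : Type*} [CommRing R]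
    [IsDomain R] [DecidableEq R] {p : R[X]} (hp : p ≠ 0) (A : Finset R) :
    #A - p.natDegree ≤ #{a ∈ A | p.eval a ≠ 0} := by
  have hroots : #{a ∈ A | p.eval a = 0} ≤ p.natDegree :=
    card_le_degree_of_subset_roots fun a ha => (mem_roots hp).2 (mem_filter.1 ha).2
  have := card_filter_add_card_filter_not (s := A) (fun a => p.eval a = 0)
  simp only [← ne_eq] at this
  omega

theorem MonomialOrder.degree_prod_X_sub_C {R σ : Type*} [CommRing R] [Nontrivial R]
    (m : MonomialOrder σ) (i : σ) (s : Finset R) :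
    m.degree (∏ r ∈ s, (X i - C r)) = Finsupp.single i #s := by
  rw [degree_prod_of_regular fun r _ => by
    rw [(m.monic_X_sub_C i r).leadingCoeff_eq_one]; exact isRegular_one]
  simp [m.degree_X_sub_C]

namespace MvPolynomial

variable {R : Type*} [CommRing R]

theorem exists_degreeOf_lt_totalDegree_le_eval_eq {σ : Type*} [Finite σ] [Nontrivial R]
    (A : σ → Finset R) (hA : ∀ i, (A i).Nonempty) (P : MvPolynomial σ R) :
    ∃ Q : MvPolynomial σ R, (∀ i, Q.degreeOf i < #(A i)) ∧ Q.totalDegree ≤ P.totalDegree ∧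
      ∀ x : σ → R, (∀ i, x i ∈ A i) → eval x Q = eval x P := by
  let _ : LinearOrder σ := WellOrderingRel.isWellOrder.linearOrder
  set b : σ → MvPolynomial σ R := fun i => ∏ r ∈ A i, (X i - C r)
  obtain ⟨g, Q, hPQ, hg, hQ⟩ := degLex.div (b := b) (fun i => by
    rw [(Monic.prod fun r _ => degLex.monic_X_sub_C i r).leadingCoeff_eq_one]
    exact isUnit_one) P
  have hQ_eq : Q = P - ∑ i ∈ g.support, g i * b i := by
    rw [hPQ, Finsupp.linearCombination_apply, Finsupp.sum]
    simp
  refine ⟨Q, fun i => ?_, ?_, fun x hx => ?_⟩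
  · rw [degreeOf_lt_iff (card_pos.2 (hA i))]
    intro c hc
    simpa [b, degLex.degree_prod_X_sub_C, Finsupp.single_le_iff] using hQ c hc i
  · rw [hQ_eq]
    refine (totalDegree_sub _ _).trans (max_le le_rfl ((totalDegree_finsetSum _ _).trans
      (Finset.sup_le fun i _ => ?_)))
    rw [mul_comm]
    exact degLex_totalDegree_monotone (hg i)
  · have hb : ∀ i, eval x (b i) = 0 := fun i => by
      simpa [b, eval_prod] using prod_eq_zero (hx i) (sub_self (x i))
    simp [hQ_eq, hb]

variable [DecidableEq R]

section Grid

variable {σ : Type*} [Fintype σ] [DecidableEq σ]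

noncomputable def gridSupport (A : σ → Finset R) (P : MvPolynomial σ R) : Finset (σ → R) :=
  {x ∈ Fintype.piFinset A | eval x P ≠ 0}

theorem mem_gridSupport {A : σ → Finset R} {P : MvPolynomial σ R} {x : σ → R} :
    x ∈ gridSupport A P ↔ (∀ i, x i ∈ A i) ∧ eval x P ≠ 0 := by
  rw [gridSupport, mem_filter, Fintype.mem_piFinset]

theorem gridSupport_nonempty_of_degreeOf_lt [IsDomain R] {P : MvPolynomial σ R} (hP : P ≠ 0)
    (A : σ → Finset R) (hdeg : ∀ i, P.degreeOf i < #(A i)) : (gridSupport A P).Nonempty := by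
  contrapose! hP
  refine eq_zero_of_eval_zero_at_prod_finset P A hdeg fun x hx => ?_
  by_contra hPx
  exact notMem_empty x (hP ▸ mem_gridSupport.2 ⟨hx, hPx⟩)

theorem card_gridSupport_rename {τ : Type*} [Fintype τ] [DecidableEq τ] (e : σ ≃ τ)
    (A : σ → Finset R) (P : MvPolynomial σ R) :
    #(gridSupport (fun j => A (e.symm j)) (rename e P)) = #(gridSupport A P) := by
  refine (card_equiv (e.arrowCongr (Equiv.refl R)) fun x => ?_).symm
  simp [gridSupport, eval_rename, Function.comp_def, e.symm.forall_congr_left]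

end Grid

theorem card_gridSupport_leadingCoeff_mul_le [IsDomain R] {n : ℕ} (A : Fin (n + 1) → Finset R)
    (P : MvPolynomial (Fin (n + 1)) R) :
    #(gridSupport (Fin.tail A) (finSuccEquiv R n P).leadingCoeff) * (#(A 0) - P.degreeOf 0) ≤
      #(gridSupport A P) := by
  set f := finSuccEquiv R n P
  set T := gridSupport (Fin.tail A) f.leadingCoeff
  have hfiber : ∀ s ∈ T, #(A 0) - P.degreeOf 0 ≤ #{a ∈ A 0 | eval (Fin.cons a s) P ≠ 0} := by
    intro s hs
    have hlc : eval s f.leadingCoeff ≠ 0 := (mem_gridSupport.1 hs).2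
    have hdeg : (f.map (eval s)).natDegree = P.degreeOf 0 := by
      rw [Polynomial.natDegree_map_of_leadingCoeff_ne_zero _ hlc, natDegree_finSuccEquiv]
    have hne : f.map (eval s) ≠ 0 := fun h => hlc <| by
      rw [Polynomial.leadingCoeff, ← Polynomial.coeff_map, h, Polynomial.coeff_zero]
    simpa only [eval_eq_eval_mv_eval', hdeg] using
      Polynomial.card_sub_natDegree_le_card_filter_eval_ne_zero_s1 hne (A 0)
  calc #T * (#(A 0) - P.degreeOf 0) = ∑ s ∈ T, (#(A 0) - P.degreeOf 0) := by
        rw [sum_const, smul_eq_mul]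
    _ ≤ ∑ s ∈ T, #{a ∈ A 0 | eval (Fin.cons a s) P ≠ 0} := sum_le_sum hfiber
    _ = #{x ∈ Fintype.piFinset A | eval (Fin.tail x) f.leadingCoeff ≠ 0 ∧ eval x P ≠ 0} := by
        rw [← filter_filter, filter_piFinset_eq_map_consEquiv A (eval · f.leadingCoeff ≠ 0),
          filter_map, card_map, card_filter, sum_product_right]
        simp only [T, gridSupport, card_filter]
        rfl
    _ ≤ #(gridSupport A P) := card_le_card (monotone_filter_right _ fun _ _ h => h.2)

open AlonFuredi

theorem exists_admissible_prod_le_card_gridSupport_of_degreeOf_lt_fin [IsDomain R] :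
    ∀ {n : ℕ} (A : Fin n → Finset R) {P : MvPolynomial (Fin n) R}, P ≠ 0 →
      (∀ i, P.degreeOf i < #(A i)) →
      ∃ q, Admissible A P.totalDegree q ∧ ∏ i, q i ≤ #(gridSupport A P)
  | 0, A, P, hP, hdeg =>
    ⟨fun _ => 1, .of_isEmpty A _,
      by simpa using (gridSupport_nonempty_of_degreeOf_lt hP A hdeg).card_pos⟩
  | n + 1, A, P, hP, hdeg => by
    set L := (finSuccEquiv R n P).leadingCoeff
    have hL : L ≠ 0 := by simpa [L] using hP
    obtain ⟨q, hq, hprod⟩ :=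
      exists_admissible_prod_le_card_gridSupport_of_degreeOf_lt_fin (Fin.tail A) hL fun j =>
        (degreeOf_coeff_finSuccEquiv P j _).trans_lt (hdeg j.succ)
    refine ⟨Fin.cons (#(A 0) - P.degreeOf 0) q, (hq.cons (hdeg 0)).mono ?_, ?_⟩
    · rw [← natDegree_finSuccEquiv]
      exact totalDegree_coeff_finSuccEquiv_add_le _ _ hL
    · rw [Fin.prod_univ_succ, Fin.cons_zero]
      simp only [Fin.cons_succ]
      calc _ ≤ (#(A 0) - P.degreeOf 0) * #(gridSupport (Fin.tail A) L) :=
            Nat.mul_le_mul_left _ hprod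
        _ ≤ _ := by rw [mul_comm]; exact card_gridSupport_leadingCoeff_mul_le A P

variable {σ : Type*} [Fintype σ] [DecidableEq σ]

theorem exists_admissible_prod_le_card_gridSupport_of_degreeOf_lt [IsDomain R]
    (A : σ → Finset R) {P : MvPolynomial σ R} (hP : P ≠ 0) (hdeg : ∀ i, P.degreeOf i < #(A i)) :
    ∃ q, Admissible A P.totalDegree q ∧ ∏ i, q i ≤ #(gridSupport A P) := by
  let e := Fintype.equivFin σ
  obtain ⟨q, hq, hprod⟩ :=
    exists_admissible_prod_le_card_gridSupport_of_degreeOf_lt_fin (fun j => A (e.symm j))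
    (P := rename e P) (by simpa using (rename_injective _ e.injective).ne hP) fun j => by
      rw [← e.apply_symm_apply j, degreeOf_rename_of_injective e.injective]
      simpa using hdeg (e.symm j)
  refine ⟨q ∘ e, (hq.comp_equiv e).mono (totalDegree_rename_le _ _), ?_⟩
  rwa [Function.comp_def, Equiv.prod_comp e q, ← card_gridSupport_rename e]

theorem exists_admissible_prod_le_card_gridSupport [IsDomain R] (A : σ → Finset R)
    {P : MvPolynomial σ R} (hP : (gridSupport A P).Nonempty) :
    ∃ q, Admissible A P.totalDegree q ∧ ∏ i, q i ≤ #(gridSupport A P) := by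
  obtain ⟨x, hx⟩ := hP
  obtain ⟨hxA, hPx⟩ := mem_gridSupport.1 hx
  have hA : ∀ i, (A i).Nonempty := fun i => ⟨x i, hxA i⟩
  obtain ⟨Q, hQdeg, hQP, hQeval⟩ := exists_degreeOf_lt_totalDegree_le_eval_eq A hA P
  have hsupp : gridSupport A Q = gridSupport A P :=
    filter_congr fun y hy => by rw [hQeval y (Fintype.mem_piFinset.1 hy)]
  have hQ : Q ≠ 0 := by
    rintro rfl
    exact hPx (by simpa using (hQeval x hxA).symm)
  obtain ⟨q, hq, hprod⟩ := exists_admissible_prod_le_card_gridSupport_of_degreeOf_lt A hQ hQdeg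
  exact ⟨q, hq.mono hQP, hsupp ▸ hprod⟩

end MvPolynomial

theorem alon_furedi_general {F : Type*} [Field F] [DecidableEq F]
    {ι : Type*} [Fintype ι] [DecidableEq ι]
    (A : ι → Finset F)
    (P : MvPolynomial ι F) (d : ℕ) (hd : d = P.totalDegree)
    (hex : ∃ x ∈ Fintype.piFinset A, eval x P ≠ 0) :
    sInf {p : ℕ | ∃ q : ι → ℕ, (∀ i, 1 ≤ q i ∧ q i ≤ (A i).card) ∧
        (∑ i, ((A i).card : ℤ)) - (d : ℤ) ≤ ∑ i, (q i : ℤ) ∧ p = ∏ i, q i} ≤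
      ((Fintype.piFinset A).filter fun x => eval x P ≠ 0).card := by
  obtain ⟨x, hx, hPx⟩ := hex
  have hP : (gridSupport A P).Nonempty := ⟨x, mem_gridSupport.2 ⟨Fintype.mem_piFinset.1 hx, hPx⟩⟩
  obtain ⟨q, hq, hprod⟩ := exists_admissible_prod_le_card_gridSupport A hP
  subst hd
  refine (Nat.sInf_le ?_).trans hprod
  exact ⟨q, hq.1, hq.2, rfl⟩

/-- The Alon–Füredi theorem (Theorem 13 of the paper): if a multivariate polynomial `P` of
total degree `d` over a field `F` does not vanish identically on a grid `∏ i, A i`, then the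
number of non-vanishing grid points is at least the minimum of `∏ i, q i` over all integer
vectors `q` with `1 ≤ q i ≤ |A i|` and `∑ i, q i ≥ ∑ i, |A i| - d`. -/
theorem alon_furedi {F : Type*} [Field F] [DecidableEq F]
    {ι : Type*} [Fintype ι] [DecidableEq ι]
    (A : ι → Finset F) (hA : ∀ i, (A i).Nonempty)
    (P : MvPolynomial ι F) (d : ℕ) (hd : d = P.totalDegree)
    (hex : ∃ x ∈ Fintype.piFinset A, eval x P ≠ 0) :
    sInf {p : ℕ | ∃ q : ι → ℕ, (∀ i, 1 ≤ q i ∧ q i ≤ (A i).card) ∧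
        (∑ i, ((A i).card : ℤ)) - (d : ℤ) ≤ ∑ i, (q i : ℤ) ∧ p = ∏ i, q i} ≤
      ((Fintype.piFinset A).filter fun x => eval x P ≠ 0).card :=
  alon_furedi_general A P d hd hex
end

section
/- Let a_1, a_2, …, a_n be positive integers (n ≥ 1) with t = max_i a_i ≥ 2 and S = ∑_{i=1}^n a_i. Then ∏_{i=1}^n a_i ≥ t^((S - n)/(t - 1)), where the right-hand side uses real exponentiation. -/
open Finset

/-! Each factor satisfies `t ^ ((a - 1) / (t - 1)) ≤ a`: this is weighted AM-GM for the points
`1` and `t` with the weights that make their mean equal to `a`. Multiplying over `i` adds the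
exponents, which sum to `(S - n) / (t - 1)`. -/

theorem Real.rpow_div_sub_one_le {a t : ℝ} (ha : 1 ≤ a) (hat : a ≤ t) (ht : 1 < t) :
    t ^ ((a - 1) / (t - 1)) ≤ a := by
  have ht1 : 0 < t - 1 := sub_pos.mpr ht
  have amgm := Real.geom_mean_le_arith_mean2_weighted
    (div_nonneg (sub_nonneg.mpr hat) ht1.le) (div_nonneg (sub_nonneg.mpr ha) ht1.le)
    zero_le_one (by linarith) (by field_simp; ring)
  rw [Real.one_rpow, one_mul] at amgm
  calc t ^ ((a - 1) / (t - 1)) ≤ (t - a) / (t - 1) * 1 + (a - 1) / (t - 1) * t := amgm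
    _ = a := by field_simp; ring

theorem technical_lemma_general {n : ℕ} (a : Fin n → ℕ) (ha : ∀ i, 1 ≤ a i)
    (t : ℕ) (ht : t = Finset.univ.sup a) (ht2 : 2 ≤ t)
    (S : ℕ) (hS : S = ∑ i, a i) :
    (t : ℝ) ^ (((S : ℝ) - (n : ℝ)) / ((t : ℝ) - 1)) ≤ ∏ i, (a i : ℝ) := by
  have ht1 : (1 : ℝ) < t := by exact_mod_cast ht2
  have hexponent : ((S : ℝ) - n) / (t - 1) = ∑ i, ((a i : ℝ) - 1) / (t - 1) := by
    simp only [← Finset.sum_div, Finset.sum_sub_distrib, hS, Nat.cast_sum, Finset.sum_const,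
      Finset.card_univ, Fintype.card_fin, nsmul_eq_mul, mul_one]
  rw [hexponent, Real.rpow_sum_of_pos (by linarith)]
  refine Finset.prod_le_prod (fun i _ => by positivity) fun i _ => ?_
  have hat : a i ≤ t := ht ▸ Finset.le_sup (Finset.mem_univ i)
  exact Real.rpow_div_sub_one_le (by exact_mod_cast ha i) (by exact_mod_cast hat) ht1

/-- The technical lemma (Lemma 14 of the paper): for positive integers `a 1, …, a n` with
maximum `t ≥ 2` and sum `S`, we have `∏ i, a i ≥ t ^ ((S - n)/(t - 1))`. -/
theorem technical_lemma {n : ℕ} (hn : 1 ≤ n) (a : Fin n → ℕ) (ha : ∀ i, 1 ≤ a i)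
    (t : ℕ) (ht : t = Finset.univ.sup a) (ht2 : 2 ≤ t)
    (S : ℕ) (hS : S = ∑ i, a i) :
    (t : ℝ) ^ (((S : ℝ) - (n : ℝ)) / ((t : ℝ) - 1)) ≤ ∏ i, (a i : ℝ) :=
  technical_lemma_general a ha t ht ht2 S hS
end

section
/- Let t and x be real numbers with t ≥ 2 and 1 ≤ x ≤ t. Then t^((x - 1)/(t - 1)) ≤ x, where t^((x-1)/(t-1)) denotes real exponentiation. -/
theorem convexity_inequality_general (t x : ℝ) (hx1 : 1 ≤ x) (hxt : x ≤ t) :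
    t ^ ((x - 1) / (t - 1)) ≤ x := by
  have bernoulli := rpow_one_add_le_one_add_mul_self (s := t - 1) (by linarith)
    (p := (x - 1) / (t - 1)) (div_nonneg (by linarith) (by linarith))
    (div_le_one_of_le₀ (by linarith) (by linarith))
  -- At `t = 1` also `x = 1`, so the junk value `0 / 0 = 0` is harmless.
  rw [add_sub_cancel, div_mul_cancel_of_imp fun h => by linarith] at bernoulli
  linarith

/-- Inequality (7) of the paper: for real `t ≥ 2` and `1 ≤ x ≤ t`,
`t ^ ((x - 1)/(t - 1)) ≤ x`. -/
theorem convexity_inequality (t x : ℝ) (ht : 2 ≤ t) (hx1 : 1 ≤ x) (hxt : x ≤ t) :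
    t ^ ((x - 1) / (t - 1)) ≤ x :=
  convexity_inequality_general t x hx1 hxt
end

section
/- Let F be a field, let E be a finite set, let V be a type, let u, v : E → V be functions, and let a, b, c : E → F. Then for every finitely supported exponent vector d : V →₀ ℕ whose total degree ∑_w d(w) equals |E|, the coefficient of the monomial X^d in the multivariate polynomial ∏_{e ∈ E} (a_e·X_{u(e)} + b_e·X_{v(e)} + c_e) over F equals the coefficient of X^d in ∏_{e ∈ E} (a_e·X_{u(e)} + b_e·X_{v(e)}). -/
/-!
Expanding `∏ e, (p e + c e)` as a sum over subsets `t ⊆ E`, the summand indexed by `t` has total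
degree at most `|t|`, so only `t = E` contributes to the coefficients of total degree `|E|`.
-/

open MvPolynomial Finset

namespace MvPolynomial

variable {R σ ι : Type*} [CommSemiring R]

theorem totalDegree_C_mul_X_add_C_mul_X_le (a b : R) (i j : σ) :
    (C a * X i + C b * X j : MvPolynomial σ R).totalDegree ≤ 1 := by
  rw [C_mul_X_eq_monomial, C_mul_X_eq_monomial]
  refine (totalDegree_add _ _).trans (max_le ?_ ?_) <;>
    exact (totalDegree_monomial_le _ _).trans_eq (by simp)

theorem totalDegree_prod_le_card {s : Finset ι} {p : ι → MvPolynomial σ R}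
    (hp : ∀ i ∈ s, (p i).totalDegree ≤ 1) : (∏ i ∈ s, p i).totalDegree ≤ #s :=
  (totalDegree_finsetProd _ _).trans (by simpa using sum_le_sum hp)

theorem coeff_prod_add_C_of_totalDegree_le_one {s : Finset ι} {p : ι → MvPolynomial σ R}
    (hp : ∀ i ∈ s, (p i).totalDegree ≤ 1) (c : ι → R) {d : σ →₀ ℕ}
    (hd : ∑ i ∈ d.support, d i = #s) :
    coeff d (∏ i ∈ s, (p i + C (c i))) = coeff d (∏ i ∈ s, p i) := by
  classical
  rw [prod_add, coeff_sum, sum_eq_single_of_mem s (mem_powerset_self s)]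
  · simp
  · intro t hts hne
    have hts : t ⊆ s := mem_powerset.1 hts
    apply coeff_eq_zero_of_totalDegree_lt
    rw [← map_prod, hd]
    calc totalDegree ((∏ i ∈ t, p i) * C (∏ i ∈ s \ t, c i))
        ≤ totalDegree (∏ i ∈ t, p i) :=
          (totalDegree_mul _ _).trans_eq (by rw [totalDegree_C, add_zero])
      _ ≤ #t := totalDegree_prod_le_card fun i hi => hp i (hts hi)
      _ < #s := card_lt_card (ssubset_of_subset_of_ne hts hne)

end MvPolynomial

/-- Core of Theorem 4 of the paper: adding constant labels `c e` to the linear factors of a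
decorated graph polynomial does not change any coefficient of top total degree `|E|`. -/
theorem labels_preserve_top_coefficients {F : Type*} [Field F] {E V : Type*} [Fintype E]
    (u v : E → V) (a b c : E → F) (d : V →₀ ℕ)
    (hd : (d.sum fun _ n => n) = Fintype.card E) :
    coeff d (∏ e : E, (C (a e) * X (u e) + C (b e) * X (v e) + C (c e))) =
      coeff d (∏ e : E, (C (a e) * X (u e) + C (b e) * X (v e))) :=
  coeff_prod_add_C_of_totalDegree_le_one
    (fun e _ => totalDegree_C_mul_X_add_C_mul_X_le (a e) (b e) (u e) (v e)) c hd
end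

section
/- Let F be a field and let G be a finite simple graph on a linearly ordered vertex type V; write each edge e of G with endpoints u_e < v_e, and assign to each edge e elements a_e, b_e ∈ F. Let d : V → ℕ be defined by d(w) = the number of neighbors u of w in G with u < w. Then the coefficient of the monomial ∏_w X_w^{d(w)} in the decorated graph polynomial D_G = ∏_{e ∈ E(G)} (a_e·X_{u_e} + b_e·X_{v_e}) equals ∏_{e ∈ E(G)} b_e. -/
/-!
Order the monomials lexicographically with larger variables weighing more. Every factor
`a_e X_{u_e} + b_e X_{v_e}` then has all its terms at or below `X_{v_e}`, so the coefficient of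
`∏_e X_{v_e}` in the product can only come from choosing `b_e X_{v_e}` in every factor. That
monomial is `∏_w X_w^{d(w)}`, because `v_e = w` exactly for the edges joining `w` to its smaller
neighbours.
-/

open MvPolynomial Finset
open scoped MonomialOrder

namespace MonomialOrder

variable {σ R : Type*} [CommSemiring R] (m : MonomialOrder σ)

theorem coeff_prod_of_degree_le {ι : Type*} (P : ι → MvPolynomial σ R) (d : ι → σ →₀ ℕ)
    (s : Finset ι) (h : ∀ i ∈ s, m.degree (P i) ≼[m] d i) :
    coeff (∑ i ∈ s, d i) (∏ i ∈ s, P i) = ∏ i ∈ s, coeff (d i) (P i) := by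
  classical
  induction s using Finset.induction_on with
  | empty => simp
  | insert i s hi ih =>
    have hs : ∀ j ∈ s, m.degree (P j) ≼[m] d j := fun j hj => h j (mem_insert_of_mem hj)
    have hprod : m.degree (∏ j ∈ s, P j) ≼[m] ∑ j ∈ s, d j := by
      refine m.degree_prod_le.trans ?_
      simpa only [map_sum] using sum_le_sum hs
    rw [prod_insert hi, sum_insert hi, prod_insert hi,
      m.coeff_mul_of_add_of_degree_le (h i (mem_insert_self i s)) hprod, ih hs]

theorem degree_C_mul_X_add_C_mul_X_le {u v : σ}
    (huv : Finsupp.single u 1 ≼[m] Finsupp.single v 1) (a b : R) :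
    m.degree (C a * X u + C b * X v) ≼[m] Finsupp.single v 1 := by
  rw [C_mul_X_eq_monomial, C_mul_X_eq_monomial]
  exact m.degree_add_le.trans (sup_le ((m.degree_monomial_le a).trans huv) (m.degree_monomial_le b))

end MonomialOrder

namespace MvPolynomial

theorem coeff_single_C_mul_X_add_C_mul_X {σ R : Type*} [CommSemiring R] {u v : σ} (huv : u ≠ v)
    (a b : R) : coeff (Finsupp.single v 1) (C a * X u + C b * X v) = b := by
  classical
  simp [coeff_X, Finsupp.single_left_inj, huv]

theorem coeff_prod_C_mul_X_add_C_mul_X {σ R ι : Type*} [CommSemiring R] [LinearOrder σ]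
    [WellFoundedLT σ] (f g : ι → σ) (a b : ι → R) (s : Finset ι) (h : ∀ i ∈ s, f i < g i) :
    coeff (∑ i ∈ s, Finsupp.single (g i) 1) (∏ i ∈ s, (C (a i) * X (f i) + C (b i) * X (g i))) =
      ∏ i ∈ s, b i := by
  -- `σᵒᵈ` is `σ`, so lex on it is a monomial order on `σ` in which larger variables weigh more.
  let m : MonomialOrder σ := MonomialOrder.lex (σ := σᵒᵈ)
  have hlt : ∀ i ∈ s, Finsupp.single (f i) 1 ≺[m] Finsupp.single (g i) 1 := fun i hi =>
    (Finsupp.Lex.single_lt_iff (α := σᵒᵈ)).mpr (h i hi)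
  rw [m.coeff_prod_of_degree_le _ _ s fun i hi => m.degree_C_mul_X_add_C_mul_X_le (hlt i hi).le _ _]
  exact prod_congr rfl fun i hi => coeff_single_C_mul_X_add_C_mul_X (h i hi).ne _ _

end MvPolynomial

namespace SimpleGraph

variable {V : Type*} [LinearOrder V] {G : SimpleGraph V}

theorem inf_lt_sup_of_mem_edgeSet {e : Sym2 V} (he : e ∈ G.edgeSet) : e.inf < e.sup := by
  induction e with | _ u v
  rcases lt_or_gt_of_ne (G.ne_of_adj he) with h | h <;> simp [h.le, h]

theorem card_filter_sup_edgeFinset_eq [Fintype V] [DecidableRel G.Adj] (w : V) :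
    #{e ∈ G.edgeFinset | e.sup = w} = #{u ∈ G.neighborFinset w | u < w} := by
  have mk_inf_sup (e : Sym2 V) : s(e.inf, e.sup) = e :=
    Sym2.inf_eq_inf_and_sup_eq_sup.mp (by simp [Sym2.inf_le_sup])
  refine card_nbij' Sym2.inf (fun u => s(u, w)) ?_ ?_ ?_ ?_
  · intro e he
    obtain ⟨hedge, rfl⟩ : e ∈ G.edgeSet ∧ e.sup = w := by simpa using he
    simp only [mem_coe, mem_filter, mem_neighborFinset]
    refine ⟨?_, inf_lt_sup_of_mem_edgeSet hedge⟩
    rwa [← mem_edgeSet, Sym2.eq_swap, mk_inf_sup]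
  · intro u hu
    obtain ⟨hwu, hlt⟩ : G.Adj w u ∧ u < w := by simpa using hu
    simpa [hlt.le] using hwu.symm
  · intro e he
    obtain ⟨-, rfl⟩ : e ∈ G.edgeFinset ∧ e.sup = w := by simpa using he
    exact mk_inf_sup e
  · intro u hu
    obtain ⟨-, hlt⟩ : G.Adj w u ∧ u < w := by simpa using hu
    simp [hlt.le]

end SimpleGraph

/-- The monomial corresponding to the acyclic orientation directing every edge towards its
larger endpoint appears in the decorated graph polynomial
`D_G = ∏_{e ∈ E(G)} (a_e·X_{min e} + b_e·X_{max e})` with coefficient `∏_{e ∈ E(G)} b_e`: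
the exponent of `X_w` is the number of neighbors of `w` smaller than `w`. -/
theorem coeff_acyclic_orientation_monomial {F : Type*} [Field F]
    {V : Type*} [Fintype V] [LinearOrder V]
    (G : SimpleGraph V) [DecidableRel G.Adj]
    (a b : Sym2 V → F) (D : V →₀ ℕ)
    (hD : ∀ w, D w = ((G.neighborFinset w).filter fun u => u < w).card) :
    coeff D (∏ e ∈ G.edgeFinset, (C (a e) * X e.inf + C (b e) * X e.sup)) =
      ∏ e ∈ G.edgeFinset, b e := by
  have hD_sum : D = ∑ e ∈ G.edgeFinset, Finsupp.single e.sup 1 := by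
    ext w
    simp only [hD, Finsupp.finsetSum_apply, Finsupp.single_apply, sum_boole, Nat.cast_id,
      G.card_filter_sup_edgeFinset_eq w]
  rw [hD_sum]
  exact coeff_prod_C_mul_X_add_C_mul_X _ _ a b _ fun e he =>
    G.inf_lt_sup_of_mem_edgeSet (G.mem_edgeFinset.mp he)
end

section
/- Let F be a field, let k ≥ 1 be a natural number, and let G be a finite simple graph with n vertices and m edges on a linearly ordered vertex type V such that every vertex has at most k neighbors strictly smaller than it. Assign to each edge e of G (with endpoints u_e < v_e) elements a_e, b_e, c_e ∈ F with a_e ≠ 0 and b_e ≠ 0, and assign to each vertex w a finite set A_w ⊆ F with |A_w| = k + 1. Then the number of functions f : V → F with f(w) ∈ A_w for every vertex w and with a_e·f(u_e) + b_e·f(v_e) + c_e ≠ 0 for every edge e of G is at least (k+1)^((k·n - m)/k), with real exponentiation. -/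
/-!
Colour the vertices greedily in increasing order. When `w` is reached, each of its at most `k`
lower neighbours `u` rules out a single colour for `w` (this is where `b e ≠ 0` enters), so at
least `k + 1 - d w` colours of `A w` survive, `d w` being the number of lower neighbours. Hence
there are at least `∏ w, (k + 1 - d w)` colourings. Bernoulli's inequality gives
`(k + 1) ^ ((k - d) / k) ≤ k + 1 - d`, and `∑ w, d w ≤ m`, which turns the product into the
bound `(k + 1) ^ ((k * n - m) / k)`.
-/

open Finset Function

theorem Sym2.inf_mem {α : Type*} [LinearOrder α] (e : Sym2 α) : e.inf ∈ e :=
  e.inductionOn fun u v => by simpa using min_choice u v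

theorem Sym2.sup_mem {α : Type*} [LinearOrder α] (e : Sym2 α) : e.sup ∈ e :=
  e.inductionOn fun u v => by simpa using max_choice u v

namespace Fintype

variable {ι β : Type*} [Fintype ι] [DecidableEq ι]

theorem update_mem_piFinset {A : ι → Finset β} {f : ι → β} (hf : f ∈ piFinset A) {w : ι}
    {x : β} (hx : x ∈ A w) : update f w x ∈ piFinset A :=
  mem_piFinset.2 <| forall_update_iff f (p := fun v y => y ∈ A v) |>.2
    ⟨hx, fun v _ => mem_piFinset.1 hf v⟩

theorem card_filter_piFinset_eq_sum_card_filter_update [DecidableEq β] (A : ι → Finset β)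
    {w : ι} {x₀ : β} (hx₀ : x₀ ∈ A w) (P : (ι → β) → Prop) [DecidablePred P] :
    #{f ∈ piFinset A | P f} =
      ∑ g ∈ piFinset A with g w = x₀, #{x ∈ A w | P (update g w x)} := by
  rw [← Finset.card_sigma]
  refine card_bij' (fun f _ => ⟨update f w x₀, f w⟩) (fun p _ => update p.1 w p.2) ?_ ?_ ?_ ?_
  · intro f hf
    simp only [mem_filter] at hf
    simp [update_mem_piFinset hf.1 hx₀, mem_piFinset.1 hf.1 w, hf.2]
  · rintro ⟨g, x⟩ hp
    simp only [mem_sigma, mem_filter] at hp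
    simp [update_mem_piFinset hp.1.1 hp.2.1, hp.2.2]
  · intro f _
    simp
  · rintro ⟨g, x⟩ hp
    simp only [mem_sigma, mem_filter] at hp
    simp [← hp.1.2]

end Fintype

namespace SimpleGraph

variable {V : Type*} [LinearOrder V] [Fintype V] (G : SimpleGraph V) [DecidableRel G.Adj]

def lowerNeighborFinset (w : V) : Finset V := {u ∈ G.neighborFinset w | u < w}

theorem sum_card_lowerNeighborFinset_le :
    ∑ w, #(G.lowerNeighborFinset w) ≤ #G.edgeFinset := by
  rw [← card_sigma]
  refine card_le_card_of_injOn (fun p => s(p.2, p.1)) ?_ ?_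
  · rintro ⟨w, u⟩ hp
    simp only [coe_sigma, Set.mem_sigma_iff, lowerNeighborFinset, coe_filter, mem_neighborFinset,
      Set.mem_ofPred_eq] at hp
    simpa using hp.2.1.symm
  · rintro ⟨w, u⟩ hp ⟨w', u'⟩ hq h
    simp only [coe_sigma, Set.mem_sigma_iff, lowerNeighborFinset, coe_filter, mem_neighborFinset,
      Set.mem_ofPred_eq] at hp hq
    rcases Sym2.eq_iff.1 h with ⟨rfl, rfl⟩ | ⟨rfl, rfl⟩
    · rfl
    · exact absurd (hp.2.2.trans hq.2.2) (lt_irrefl _)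

variable {F : Type*} [Field F] (a b c : Sym2 V → F)

def IsFieldColoringOn (s : Finset V) (f : V → F) : Prop :=
  ∀ e ∈ G.edgeFinset, e ∈ s.sym2 → a e * f e.inf + b e * f e.sup + c e ≠ 0

instance [DecidableEq V] [DecidableEq F] (s : Finset V) :
    DecidablePred (G.IsFieldColoringOn a b c s) :=
  fun _ => by unfold IsFieldColoringOn; infer_instance

variable {G a b c}

theorem isFieldColoringOn_univ {f : V → F} :
    G.IsFieldColoringOn a b c univ f ↔
      ∀ e ∈ G.edgeFinset, a e * f e.inf + b e * f e.sup + c e ≠ 0 := by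
  simp [IsFieldColoringOn]

theorem isFieldColoringOn_update_of_notMem [DecidableEq V] {s : Finset V} {w : V} (hw : w ∉ s)
    (f : V → F) (x : F) :
    G.IsFieldColoringOn a b c s (update f w x) ↔ G.IsFieldColoringOn a b c s f := by
  refine forall₂_congr fun e _ => imp_congr_right fun hes => ?_
  have hne : ∀ v ∈ e, v ≠ w := fun v hv => ne_of_mem_of_not_mem (mem_sym2_iff.1 hes v hv) hw
  rw [update_of_ne (hne _ e.inf_mem), update_of_ne (hne _ e.sup_mem)]

theorem card_sub_card_lowerNeighborFinset_le [DecidableEq V] [DecidableEq F]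
    (hb : ∀ e ∈ G.edgeFinset, b e ≠ 0) {s : Finset V} {w : V} (hs : ∀ u ∈ s, u < w)
    {g : V → F} (hg : G.IsFieldColoringOn a b c s g) (X : Finset F) :
    #X - #(G.lowerNeighborFinset w) ≤
      #{x ∈ X | G.IsFieldColoringOn a b c (insert w s) (update g w x)} := by
  have hw : w ∉ s := fun h => lt_irrefl w (hs w h)
  -- a lower neighbour `u` rules out only the root of `a e * g u + b e * x + c e` in `x`
  set forbidden := (G.lowerNeighborFinset w).image fun u =>
    -(a s(u, w) * g u + c s(u, w)) / b s(u, w)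
  calc #X - #(G.lowerNeighborFinset w) ≤ #X - #forbidden := Nat.sub_le_sub_left card_image_le _
    _ ≤ #(X \ forbidden) := le_card_sdiff _ _
    _ ≤ _ := card_le_card fun x hx => ?_
  rw [mem_sdiff] at hx
  refine mem_filter.2 ⟨hx.1, fun e he hes => ?_⟩
  by_cases hwe : w ∈ e
  · obtain ⟨u, rfl⟩ := Sym2.mem_iff_exists.1 hwe
    have hadj : G.Adj u w := (mem_edgeFinset.1 he).symm
    have hu : u ∈ s := (mem_insert.1 (mk_mem_sym2_iff.1 hes).2).resolve_left hadj.ne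
    have huw : u < w := hs u hu
    rw [Sym2.eq_swap] at he ⊢
    simp only [Sym2.inf_mk, Sym2.sup_mk, min_eq_left huw.le, max_eq_right huw.le, update_self,
      update_of_ne huw.ne]
    intro h
    refine hx.2 (mem_image.2 ⟨u, ?_, ?_⟩)
    · simpa [lowerNeighborFinset] using ⟨hadj.symm, huw⟩
    · rw [div_eq_iff (hb _ he)]
      linear_combination -h
  · have hes' : e ∈ s.sym2 := mem_sym2_iff.2 fun v hv =>
      (mem_insert.1 (mem_sym2_iff.1 hes v hv)).resolve_left (ne_of_mem_of_not_mem hv hwe)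
    exact (isFieldColoringOn_update_of_notMem hw g x).2 hg e he hes'

theorem card_sub_mul_card_filter_le [DecidableEq V] [DecidableEq F]
    (hb : ∀ e ∈ G.edgeFinset, b e ≠ 0) (A : V → Finset F) {s : Finset V} {w : V}
    (hs : ∀ u ∈ s, u < w) :
    (#(A w) - #(G.lowerNeighborFinset w)) *
        #{f ∈ Fintype.piFinset A | G.IsFieldColoringOn a b c s f} ≤
      #(A w) * #{f ∈ Fintype.piFinset A | G.IsFieldColoringOn a b c (insert w s) f} := by
  obtain hA | ⟨x₀, hx₀⟩ := (A w).eq_empty_or_nonempty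
  · simp [hA]
  have hw : w ∉ s := fun h => lt_irrefl w (hs w h)
  simp only [Fintype.card_filter_piFinset_eq_sum_card_filter_update A hx₀,
    isFieldColoringOn_update_of_notMem hw, mul_sum]
  refine sum_le_sum fun g _ => ?_
  by_cases hg : G.IsFieldColoringOn a b c s g
  · rw [filter_true_of_mem fun _ _ => hg, mul_comm]
    exact Nat.mul_le_mul_left _ (card_sub_card_lowerNeighborFinset_le hb hs hg (A w))
  · simp [hg]

theorem prod_card_sub_mul_prod_card_le_card_filter [DecidableEq V] [DecidableEq F]
    (hb : ∀ e ∈ G.edgeFinset, b e ≠ 0) (A : V → Finset F) (s : Finset V) :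
    (∏ w ∈ s, (#(A w) - #(G.lowerNeighborFinset w))) * ∏ w ∈ sᶜ, #(A w) ≤
      #{f ∈ Fintype.piFinset A | G.IsFieldColoringOn a b c s f} := by
  induction s using Finset.induction_on_max with
  | empty => simp [IsFieldColoringOn, Fintype.card_piFinset]
  | insert w s hs ih =>
    have hw : w ∉ s := fun h => lt_irrefl w (hs w h)
    rcases Nat.eq_zero_or_pos #(A w) with hA | hA
    · simp [prod_insert hw, hA]
    refine Nat.le_of_mul_le_mul_left ?_ hA
    calc #(A w) * ((∏ v ∈ insert w s, (#(A v) - #(G.lowerNeighborFinset v))) *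
            ∏ v ∈ (insert w s)ᶜ, #(A v))
        = (#(A w) - #(G.lowerNeighborFinset w)) *
            ((∏ v ∈ s, (#(A v) - #(G.lowerNeighborFinset v))) * ∏ v ∈ sᶜ, #(A v)) := by
          rw [prod_insert hw, compl_insert, ← mul_prod_erase sᶜ _ (mem_compl.2 hw)]
          ring
      _ ≤ (#(A w) - #(G.lowerNeighborFinset w)) *
            #{f ∈ Fintype.piFinset A | G.IsFieldColoringOn a b c s f} :=
          Nat.mul_le_mul_left _ ih
      _ ≤ _ := card_sub_mul_card_filter_le hb A hs

end SimpleGraph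

theorem Real.add_one_rpow_sub_div_le {k d : ℝ} (hd : 0 ≤ d) (hdk : d ≤ k) :
    (k + 1) ^ ((k - d) / k) ≤ k + 1 - d := by
  have hk : 0 ≤ k := hd.trans hdk
  have h := rpow_one_add_le_one_add_mul_self (by linarith : -1 ≤ k)
    (div_nonneg (sub_nonneg.2 hdk) hk) (div_le_one_of_le₀ (sub_le_self k hd) hk)
  rw [div_mul_cancel_of_imp fun hk0 => by linarith, add_comm 1 k] at h
  linarith

theorem Real.add_one_rpow_le_prod {ι : Type*} (s : Finset ι) {k m : ℝ} (hk : 0 ≤ k)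
    (d : ι → ℝ) (hd : ∀ i ∈ s, 0 ≤ d i ∧ d i ≤ k) (hm : ∑ i ∈ s, d i ≤ m) :
    (k + 1) ^ ((k * #s - m) / k) ≤ ∏ i ∈ s, (k + 1 - d i) :=
  calc (k + 1) ^ ((k * #s - m) / k) ≤ (k + 1) ^ ((k * #s - ∑ i ∈ s, d i) / k) := by
        gcongr
        linarith
    _ = ∏ i ∈ s, (k + 1) ^ ((k - d i) / k) := by
        rw [← Real.rpow_sum_of_pos (by linarith), ← sum_div, sum_sub_distrib, sum_const,
          nsmul_eq_mul, mul_comm]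
    _ ≤ ∏ i ∈ s, (k + 1 - d i) :=
        prod_le_prod (fun _ _ => by positivity) fun i hi =>
          Real.add_one_rpow_sub_div_le (hd i hi).1 (hd i hi).2

theorem card_field_colorings_of_degenerate_general {F : Type*} [Field F] [DecidableEq F]
    {V : Type*} [Fintype V] [LinearOrder V] [DecidableEq V] (k : ℕ)
    (G : SimpleGraph V) [DecidableRel G.Adj]
    (hcol : ∀ w : V, ((G.neighborFinset w).filter fun u => u < w).card ≤ k)
    (a b c : Sym2 V → F)
    (hb : ∀ e ∈ G.edgeFinset, b e ≠ 0)
    (A : V → Finset F) (hA : ∀ w, (A w).card = k + 1)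
    (n m : ℕ) (hn : n = Fintype.card V) (hm : m = G.edgeFinset.card) :
    ((k : ℝ) + 1) ^ (((k * n : ℝ) - (m : ℝ)) / (k : ℝ)) ≤
      (((Fintype.piFinset A).filter fun f =>
        ∀ e ∈ G.edgeFinset, a e * f e.inf + b e * f e.sup + c e ≠ 0).card : ℝ) := by
  have hlower : ∀ w, #(G.lowerNeighborFinset w) ≤ k := hcol
  have hcount := G.prod_card_sub_mul_prod_card_le_card_filter (a := a) (c := c) hb A univ
  simp only [compl_univ, prod_empty, mul_one, hA, SimpleGraph.isFieldColoringOn_univ] at hcount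
  have hsum : ∑ w, (#(G.lowerNeighborFinset w) : ℝ) ≤ m := by
    rw [hm]; exact_mod_cast G.sum_card_lowerNeighborFinset_le
  calc ((k : ℝ) + 1) ^ (((k * n : ℝ) - (m : ℝ)) / (k : ℝ))
      ≤ ∏ w, ((k : ℝ) + 1 - #(G.lowerNeighborFinset w)) := by
        rw [hn, ← card_univ]
        exact Real.add_one_rpow_le_prod univ k.cast_nonneg _
          (fun w _ => ⟨Nat.cast_nonneg _, by exact_mod_cast hlower w⟩) hsum
    _ = ((∏ w, (k + 1 - #(G.lowerNeighborFinset w)) : ℕ) : ℝ) := by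
        rw [Nat.cast_prod]
        refine prod_congr rfl fun w _ => ?_
        rw [Nat.cast_sub ((hlower w).trans k.le_succ), Nat.cast_succ]
    _ ≤ _ := by exact_mod_cast hcount

/-- Counting field colorings (the mechanism of Corollary 12 of the paper): under the
hypotheses of field choosability with lists of size exactly `k + 1`, the number of colorings
is at least `(k+1) ^ ((k·n - m)/k)`, where `n` is the number of vertices and `m` the number
of edges of `G`. -/
theorem card_field_colorings_of_degenerate {F : Type*} [Field F] [DecidableEq F]
    {V : Type*} [Fintype V] [LinearOrder V] [DecidableEq V] (k : ℕ) (hk : 1 ≤ k)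
    (G : SimpleGraph V) [DecidableRel G.Adj]
    (hcol : ∀ w : V, ((G.neighborFinset w).filter fun u => u < w).card ≤ k)
    (a b c : Sym2 V → F)
    (ha : ∀ e ∈ G.edgeFinset, a e ≠ 0) (hb : ∀ e ∈ G.edgeFinset, b e ≠ 0)
    (A : V → Finset F) (hA : ∀ w, (A w).card = k + 1)
    (n m : ℕ) (hn : n = Fintype.card V) (hm : m = G.edgeFinset.card) :
    ((k : ℝ) + 1) ^ (((k * n : ℝ) - (m : ℝ)) / (k : ℝ)) ≤
      (((Fintype.piFinset A).filter fun f =>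
        ∀ e ∈ G.edgeFinset, a e * f e.inf + b e * f e.sup + c e ≠ 0).card : ℝ) :=
  card_field_colorings_of_degenerate_general k G hcol a b c hb A hA n m hn hm
end

section
/- Let G be a connected finite simple graph on n vertices with maximum degree Δ ≥ 3, and suppose G is not a complete graph. Then the number of proper colorings of G with Δ colors is at least (√Δ)^(n·(1 - 1/(Δ-1))), equivalently at least Δ^(n·(Δ-2)/(2·(Δ-1))), with real exponentiation. -/
/-!
Brooks' theorem gives a proper colouring `c : V → Fin Δ`. Identify `Fin Δ` with `Δ` distinct reals.
On the grid `(Fin Δ)^V` the graph polynomial `∏_{uv ∈ E} (X u - X v)`, of degree `|E| ≤ nΔ/2`, is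
non-zero exactly at the proper colourings, in particular at `c`. By the weak Alon–Füredi bound, a
polynomial of degree `d` that does not vanish on a grid `T^n` with `|T| = q ≥ 2` has at least
`q ^ (n - d/(q-1))` non-zeros there; here this is at least `Δ ^ (n - nΔ/(2(Δ-1)))`.

For the bound, first reduce the polynomial modulo the `∏_{t ∈ T} (X i - t)`, so that every variable
has degree `< q`, and induct on `n`: the leading coefficient in `X 0`, of degree `k < q`, is non-zero
at many points of `T^(n-1)`, each of which has at least `q - k ≥ q ^ (1 - k/(q-1))` non-zero
extensions (Bernoulli's inequality).

Brooks' theorem follows Lovász. If some vertex has degree `< Δ`, colour greedily in order of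
decreasing distance to it. If `G` is `Δ`-regular with a cut vertex `z`, colour both sides at `z` in
this way and permute colours so that they agree at `z`. Otherwise `G` is 2-connected, and some
vertex `x` has non-adjacent neighbours `a, b` with `G - {a, b}` connected: colour `a` and `b` alike,
then greedily towards `x`, which sees at most `Δ - 1` colours.
-/

open Finset MvPolynomial

lemma rpow_one_sub_div_le {q k : ℝ} (hq : 1 < q) (hk₀ : 0 ≤ k) (hk : k ≤ q - 1) :
    q ^ (1 - k / (q - 1)) ≤ q - k := by
  have hq' : 0 < q - 1 := by linarith
  have h := rpow_one_add_le_one_add_mul_self (s := q - 1) (by linarith)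
    (p := 1 - k / (q - 1)) (by rw [sub_nonneg, div_le_one hq']; exact hk)
    (by linarith [div_nonneg hk₀ hq'.le])
  rw [add_sub_cancel] at h
  refine h.trans (le_of_eq ?_)
  field_simp
  ring

lemma rpow_succ_sub_div_le_sub_mul {q N : ℝ} (hq : 1 < q) {n k d d' : ℕ} (hk : (k : ℝ) ≤ q - 1)
    (hd : d' + k ≤ d) (hN : q ^ ((n : ℝ) - d' / (q - 1)) ≤ N) :
    q ^ (((n + 1 : ℕ) : ℝ) - d / (q - 1)) ≤ (q - k) * N :=
  calc q ^ (((n + 1 : ℕ) : ℝ) - d / (q - 1))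
      = q ^ (1 - k / (q - 1)) * q ^ ((n : ℝ) - (d - k) / (q - 1)) := by
        rw [← Real.rpow_add (by linarith)]
        congr 1
        push_cast
        ring
    _ ≤ (q - k) * q ^ ((n : ℝ) - d' / (q - 1)) := by
        gcongr
        · linarith
        · exact rpow_one_sub_div_le hq (by positivity) hk
        · exact hq.le
        · rw [le_sub_iff_add_le]
          exact_mod_cast hd
    _ ≤ (q - k) * N := by
        gcongr
        linarith

lemma card_filter_fin_succ_eq_sum {A : Type*} [Fintype A] {n : ℕ}
    (p : (Fin (n + 1) → A) → Prop) [DecidablePred p] :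
    #{x | p x} = ∑ y : Fin n → A, #{a | p (Fin.cons a y)} := by
  simp only [card_filter]
  rw [← Fintype.sum_equiv (Fin.consEquiv fun _ => A)
    (fun ay => if p (Fin.cons ay.1 ay.2) then 1 else 0) _ (fun _ => rfl),
    Fintype.sum_prod_type, Finset.sum_comm]

namespace MvPolynomial

variable {K : Type*} [Field K]

/-- Reduction modulo the polynomials `∏_{t ∈ T} (X i - t)`, which vanish on the grid `T^σ`:
division with respect to the degree-lexicographic order does not raise the total degree. -/
theorem exists_degreeOf_lt_card_eval_eq_s11 {σ : Type*} [Finite σ] {T : Finset K}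
    (hT : T.Nonempty) (F : MvPolynomial σ K) :
    ∃ r : MvPolynomial σ K, r.totalDegree ≤ F.totalDegree ∧ (∀ i, degreeOf i r < #T) ∧
      ∀ x : σ → K, (∀ i, x i ∈ T) → eval x r = eval x F := by
  let _ : LinearOrder σ := WellOrderingRel.isWellOrder.linearOrder
  have : WellFoundedGT σ := Finite.to_wellFoundedGT
  set b : σ → MvPolynomial σ K := fun i => ∏ t ∈ T, (X i - C t)
  have hb : ∀ i, MonomialOrder.degLex.degree (b i) = Finsupp.single i #T := by
    intro i
    rw [MonomialOrder.degree_prod_of_regular]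
    · simp [MonomialOrder.degree_X_sub_C]
    · intro t _
      rw [(MonomialOrder.degLex.monic_X_sub_C i t).leadingCoeff_eq_one]
      exact isRegular_one
  obtain ⟨g, r, hFr, hdeg, hred⟩ := MonomialOrder.degLex.div (b := b)
    (fun i => by rw [(MonomialOrder.Monic.prod fun t _ =>
      MonomialOrder.degLex.monic_X_sub_C i t).leadingCoeff_eq_one]; exact isUnit_one) F
  have hr : r = F - ∑ i ∈ g.support, g i * b i := by
    rw [hFr, Finsupp.linearCombination_apply, Finsupp.sum]
    simp [mul_comm]
  refine ⟨r, ?_, fun i => ?_, fun x hx => ?_⟩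
  · apply degLex_totalDegree_monotone
    rw [hr]
    refine MonomialOrder.degree_sub_le.trans (sup_le le_rfl ?_)
    refine MonomialOrder.degree_sum_le.trans (Finset.sup_le fun i _ => ?_)
    rw [mul_comm]
    exact hdeg i
  · rw [degreeOf_lt_iff hT.card_pos]
    intro c hc
    simpa [hb, Finsupp.single_le_iff] using hred c hc i
  · rw [hr, map_sub, map_sum, sub_eq_self]
    refine Finset.sum_eq_zero fun i _ => ?_
    rw [map_mul, map_prod]
    exact mul_eq_zero_of_right _ (Finset.prod_eq_zero (hx i) (by simp))

variable {A : Type*} [Fintype A] [DecidableEq K]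

lemma card_sub_degreeOf_le_card_eval_cons_ne_zero {n : ℕ} (e : A ↪ K)
    (F : MvPolynomial (Fin (n + 1)) K) (y : Fin n → A)
    (hy : eval (e ∘ y) (finSuccEquiv K n F).leadingCoeff ≠ 0) :
    Fintype.card A - degreeOf 0 F ≤ #{a : A | eval (e ∘ Fin.cons a y) F ≠ 0} := by
  set u := (finSuccEquiv K n F).map (eval (e ∘ y))
  have hu : u ≠ 0 := by
    intro h
    apply hy
    simpa [u, Polynomial.coeff_map] using
      congrArg (Polynomial.coeff · (finSuccEquiv K n F).natDegree) h
  have hzeros : #{a : A | eval (e ∘ Fin.cons a y) F = 0} ≤ degreeOf 0 F := by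
    rw [← natDegree_finSuccEquiv, ← card_map e]
    refine (Polynomial.card_le_degree_of_subset_roots (p := u) fun z hz => ?_).trans
      Polynomial.natDegree_map_le
    obtain ⟨a, ha, rfl⟩ := Finset.mem_map.mp hz
    rw [Polynomial.mem_roots hu, Polynomial.IsRoot, ← eval_eq_eval_mv_eval', ← Fin.comp_cons]
    exact (Finset.mem_filter.mp ha).2
  have := Finset.card_filter_add_card_filter_not (s := (univ : Finset A))
    (p := fun a => eval (e ∘ Fin.cons a y) F = 0)
  rw [card_univ] at this
  simp only [ne_eq]
  omega

theorem le_card_eval_ne_zero_of_degreeOf_lt (e : A ↪ K) (hA : 1 < Fintype.card A) {n : ℕ}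
    (F : MvPolynomial (Fin n) K) (hF : F ≠ 0) (hdeg : ∀ i, degreeOf i F < Fintype.card A) :
    (Fintype.card A : ℝ) ^ ((n : ℝ) - F.totalDegree / (Fintype.card A - 1)) ≤
      #{x : Fin n → A | eval (e ∘ x) F ≠ 0} := by
  have hq : (1 : ℝ) < Fintype.card A := by exact_mod_cast hA
  induction n with
  | zero =>
    have hval : ∀ x : Fin 0 → A, eval (e ∘ x) F ≠ 0 := by
      rw [eq_C_of_isEmpty F] at hF ⊢
      exact fun x => by simpa [eval_C] using hF
    rw [filter_true_of_mem fun x _ => hval x, card_univ]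
    simpa using Real.rpow_le_one_of_one_le_of_nonpos hq.le
      (neg_nonpos.mpr (by positivity : (0 : ℝ) ≤ F.totalDegree / (Fintype.card A - 1)))
  | succ n ih =>
    set c := (finSuccEquiv K n F).leadingCoeff
    have hc : c ≠ 0 := by
      rw [Ne, Polynomial.leadingCoeff_eq_zero, EmbeddingLike.map_eq_zero_iff]
      exact hF
    have hck : c.totalDegree + degreeOf 0 F ≤ F.totalDegree := by
      rw [← natDegree_finSuccEquiv]
      exact totalDegree_coeff_finSuccEquiv_add_le F _ hc
    have hIH := ih c hc fun j => (degreeOf_coeff_finSuccEquiv F j _).trans_lt (hdeg j.succ)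
    have hcount : (Fintype.card A - degreeOf 0 F) * #{y : Fin n → A | eval (e ∘ y) c ≠ 0} ≤
        #{x : Fin (n + 1) → A | eval (e ∘ x) F ≠ 0} := by
      rw [card_filter_fin_succ_eq_sum, mul_comm, card_eq_sum_ones, sum_mul, one_mul]
      exact (sum_le_sum fun y hy => card_sub_degreeOf_le_card_eval_cons_ne_zero e F y
        (Finset.mem_filter.mp hy).2).trans (sum_le_sum_of_subset (subset_univ _))
    have hk : degreeOf 0 F < Fintype.card A := hdeg 0
    refine (rpow_succ_sub_div_le_sub_mul hq (k := degreeOf 0 F) ?_ hck hIH).trans ?_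
    · rw [le_sub_iff_add_le]
      exact_mod_cast hk
    · rw [← Nat.cast_sub hk.le]
      exact_mod_cast hcount

theorem weak_alon_furedi {σ : Type*} [Fintype σ] [DecidableEq σ] (e : A ↪ K)
    (hA : 1 < Fintype.card A) (F : MvPolynomial σ K) (x₀ : σ → A) (hx₀ : eval (e ∘ x₀) F ≠ 0) :
    (Fintype.card A : ℝ) ^ ((Fintype.card σ : ℝ) - F.totalDegree / (Fintype.card A - 1)) ≤
      #{x : σ → A | eval (e ∘ x) F ≠ 0} := by
  set ι := Fintype.equivFin σ
  have hT : (univ.map e).Nonempty := by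
    rw [← card_pos, card_map, card_univ]
    omega
  obtain ⟨r, hrdeg, hred, hrF⟩ := exists_degreeOf_lt_card_eval_eq_s11 hT (rename ι F)
  rw [card_map, card_univ] at hred
  have hr : ∀ y : Fin (Fintype.card σ) → A, eval (e ∘ y) r = eval (e ∘ y ∘ ι) F := by
    intro y
    rw [hrF (e ∘ y) fun i => mem_map_of_mem e (mem_univ _), eval_rename]
    rfl
  have hr0 : r ≠ 0 := by
    intro h
    apply hx₀
    simpa [h, Function.comp_def] using (hr (x₀ ∘ ι.symm)).symm
  have hcard : #{y : Fin (Fintype.card σ) → A | eval (e ∘ y) r ≠ 0} =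
      #{x : σ → A | eval (e ∘ x) F ≠ 0} :=
    card_equiv (ι.arrowCongr (Equiv.refl A)).symm fun y => by
      simp only [mem_filter, mem_univ, true_and, hr]
      rfl
  have hq : (1 : ℝ) ≤ Fintype.card A := by exact_mod_cast hA.le
  have hq' : (0 : ℝ) < Fintype.card A - 1 := by
    rw [sub_pos]
    exact_mod_cast hA
  rw [← hcard]
  refine le_trans ?_ (le_card_eval_ne_zero_of_degreeOf_lt e hA r hr0 hred)
  refine Real.rpow_le_rpow_of_exponent_le hq (sub_le_sub_left ?_ _)
  gcongr
  exact_mod_cast hrdeg.trans (totalDegree_rename_le _ _)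

end MvPolynomial

lemma Finset.card_image_lt_of_map_eq {α β : Type*} [DecidableEq α] [DecidableEq β] {s : Finset α}
    {f : α → β} {a b : α} (ha : a ∈ s) (hb : b ∈ s) (hab : a ≠ b) (hf : f a = f b) :
    #(s.image f) < #s := by
  have : s.image f ⊆ (s.erase b).image f := by
    intro y hy
    obtain ⟨c, hc, rfl⟩ := mem_image.mp hy
    by_cases hcb : c = b
    · exact mem_image.mpr ⟨a, mem_erase.mpr ⟨hab, ha⟩, hcb ▸ hf⟩
    · exact mem_image_of_mem f (mem_erase.mpr ⟨hcb, hc⟩)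
  exact (card_le_card this).trans_lt (card_image_le.trans_lt (card_erase_lt_of_mem hb))

namespace SimpleGraph

variable {V : Type*} (G : SimpleGraph V)

/-- The induced subgraph `G[s]` as a graph on all of `V`: the vertices outside `s` are isolated. -/
def restrict (s : Set V) : SimpleGraph V where
  Adj u v := G.Adj u v ∧ u ∈ s ∧ v ∈ s
  symm.symm _ _ h := ⟨h.1.symm, h.2.2, h.2.1⟩
  loopless.irrefl _ h := G.loopless.irrefl _ h.1

variable {G} {s t : Set V} {u v w : V}

@[simp]
lemma restrict_adj : (G.restrict s).Adj u v ↔ G.Adj u v ∧ u ∈ s ∧ v ∈ s := Iff.rfl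

lemma restrict_le (s : Set V) : G.restrict s ≤ G := fun _ _ h => h.1

lemma restrict_mono (h : s ⊆ t) : G.restrict s ≤ G.restrict t :=
  fun _ _ huv => ⟨huv.1, h huv.2.1, h huv.2.2⟩

lemma restrict_restrict_le (s t : Set V) : (G.restrict s).restrict t ≤ G.restrict t :=
  fun _ _ h => ⟨h.1.1, h.2⟩

lemma Walk.reachable_restrict (p : G.Walk u v) (hp : ∀ x ∈ p.support, x ∈ s) :
    (G.restrict s).Reachable u v := by
  induction p with
  | nil => rfl
  | cons h p ih =>
    simp only [Walk.support_cons, List.mem_cons, forall_eq_or_imp] at hp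
    exact (Adj.reachable (G := G.restrict s) ⟨h, hp.1, hp.2 _ p.start_mem_support⟩).trans
      (ih hp.2)

lemma Walk.mem_of_mem_support_restrict {p : (G.restrict s).Walk u v} (hu : u ∈ s)
    (hw : w ∈ p.support) : w ∈ s := by
  induction p with
  | nil => simp_all
  | cons h p ih =>
    rw [Walk.support_cons, List.mem_cons] at hw
    rcases hw with rfl | hw
    exacts [hu, ih h.2.2 hw]

lemma Reachable.mem_of_restrict (h : (G.restrict s).Reachable u v) (hu : u ∈ s) : v ∈ s := by
  obtain ⟨p⟩ := h
  exact p.mem_of_mem_support_restrict hu p.end_mem_support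

lemma Reachable.reachable_restrict_setOf_reachable (h : G.Reachable u v) :
    (G.restrict {w | G.Reachable u w}).Reachable u v := by
  classical
  obtain ⟨p⟩ := h
  exact p.reachable_restrict fun x hx => ⟨p.takeUntil x hx⟩

lemma Reachable.exists_reachable_restrict_adj_notMem (h : G.Reachable u v) (hu : u ∈ s)
    (hv : v ∉ s) :
    ∃ c w, (G.restrict s).Reachable u c ∧ c ∈ s ∧ G.Adj c w ∧ w ∉ s := by
  obtain ⟨p⟩ := h
  induction p with
  | nil => exact absurd hu hv
  | @cons u v' _ h p ih =>
    by_cases hv' : v' ∈ s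
    · obtain ⟨c, w, hc, hcs, hcw, hw⟩ := ih hv' hv
      exact ⟨c, w, (Adj.reachable (G := G.restrict s) ⟨h, hu, hv'⟩).trans hc, hcs, hcw, hw⟩
    · exact ⟨u, v', .rfl, hu, h, hv'⟩

lemma Reachable.exists_adj_dist_lt (h : G.Reachable u v) (hne : u ≠ v) :
    ∃ w, G.Adj u w ∧ G.dist w v < G.dist u v := by
  obtain ⟨p, hp⟩ := h.exists_walk_length_eq_dist
  cases p with
  | nil => exact absurd rfl hne
  | cons h p =>
    refine ⟨_, h, (dist_le p).trans_lt ?_⟩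
    rw [← hp, Walk.length_cons]
    omega

lemma Walk.eq_getVert_one_of_adj (p : G.Walk u v) (hp : p.length = G.dist u v)
    (hw : w ∈ p.support) (h : G.Adj u w) : w = p.getVert 1 := by
  obtain ⟨n, rfl, hn⟩ := Walk.mem_support_iff_exists_getVert.mp hw
  have := dist_le ((p.drop n).cons h)
  rw [Walk.length_cons, Walk.drop_length, ← hp] at this
  rcases n with _ | _ | n
  · exact absurd h (by simp)
  · rfl
  · omega

lemma reachable_restrict_compl_pair_of_length_eq_dist {x y a b : V} (P : (G.restrict s).Walk x y)
    (hP : P.length = (G.restrict s).dist x y) (hx : x ∈ s) (hxa : G.Adj x a) (ha : a ∈ s)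
    (haP : a ≠ P.getVert 1) (hb : b ∉ s) : (G.restrict {a, b}ᶜ).Reachable x y := by
  refine (P.reachable_restrict fun v hv => ?_).mono (restrict_restrict_le _ _)
  have hvs := P.mem_of_mem_support_restrict hx hv
  simp only [Set.mem_compl_iff, Set.mem_insert_iff, Set.mem_singleton_iff, not_or]
  constructor
  · rintro rfl
    exact haP (P.eq_getVert_one_of_adj hP hv ⟨hxa, hx, hvs⟩)
  · rintro rfl
    exact hb hvs

section TwoCut

variable {x y : V}

lemma exists_reachable_restrict_compl_pair_adj
    (hy : ∀ u w, u ≠ y → w ≠ y → (G.restrict {y}ᶜ).Reachable u w) (hxy : x ≠ y) {t : V}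
    (ht : t ∈ ({x, y}ᶜ : Set V)) :
    ∃ c, (G.restrict {x, y}ᶜ).Reachable t c ∧ G.Adj c x := by
  have hty : t ≠ y := fun h => ht (by simp [h])
  obtain ⟨c, e, htc, -, hce, he⟩ := (hy t x hty hxy).exists_reachable_restrict_adj_notMem ht
    (by simp : x ∉ ({x, y}ᶜ : Set V))
  have hey : e ≠ y := hce.2.2
  have hex : e = x := by simpa [hey] using he
  exact ⟨c, htc.mono (restrict_restrict_le _ _), hex ▸ hce.1⟩

lemma reachable_restrict_insert_insert_setOf_reachable
    (h2 : ∀ z u w, u ≠ z → w ≠ z → (G.restrict {z}ᶜ).Reachable u w) (hxy : x ≠ y) {t : V}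
    (ht : t ∈ ({x, y}ᶜ : Set V)) :
    (G.restrict (insert x (insert y {v | (G.restrict {x, y}ᶜ).Reachable t v}))).Reachable x y := by
  set H := G.restrict {x, y}ᶜ
  obtain ⟨c, htc, hcx⟩ := exists_reachable_restrict_compl_pair_adj (h2 y) hxy ht
  obtain ⟨d, htd, hdy⟩ := exists_reachable_restrict_compl_pair_adj (h2 x) hxy.symm
    (Set.pair_comm x y ▸ ht)
  rw [Set.pair_comm] at htd
  have hcd : (H.restrict {v | H.Reachable c v}).Reachable c d :=
    (htc.symm.trans htd).reachable_restrict_setOf_reachable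
  have hmono : H.restrict {v | H.Reachable c v} ≤
      G.restrict (insert x (insert y {v | H.Reachable t v})) := fun p q h =>
    ⟨h.1.1, .inr (.inr (htc.trans h.2.1)), .inr (.inr (htc.trans h.2.2))⟩
  exact (Adj.reachable (G := G.restrict _) ⟨hcx.symm, .inl rfl, .inr (.inr htc)⟩).trans
    ((hcd.mono hmono).trans
      (Adj.reachable (G := G.restrict _) ⟨hdy, .inr (.inr htd), .inr (.inl rfl)⟩))

/-- A walk from `v` to `x` avoiding `c` leaves `G - {x, y}` through `x` or `y`, not through `d`. -/
lemma reachable_restrict_compl_pair_of_not_reachable {c d v : V}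
    (hc₂ : ∀ u w, u ≠ c → w ≠ c → (G.restrict {c}ᶜ).Reachable u w)
    (hc : c ∈ ({x, y}ᶜ : Set V)) (hd : d ∈ ({x, y}ᶜ : Set V)) (hv : v ∈ ({x, y}ᶜ : Set V))
    (hvc : v ≠ c) (hvd : ¬(G.restrict {x, y}ᶜ).Reachable v d)
    (hxy : (G.restrict {c, d}ᶜ).Reachable x y) : (G.restrict {c, d}ᶜ).Reachable v x := by
  have hvd' : v ≠ d := by
    rintro rfl
    exact hvd .rfl
  have hxc : x ≠ c := fun h => hc (by simp [h])
  obtain ⟨c', e, hvc', hc', hc'e, he⟩ := (hc₂ v x hvc hxc).exists_reachable_restrict_adj_notMem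
    (s := {c, d}ᶜ ∩ {x, y}ᶜ) ⟨by simp [hvc, hvd'], hv⟩ (fun h => h.2 (by simp))
  replace hvc' := hvc'.mono (restrict_restrict_le _ _)
  have hed : e ≠ d := by
    rintro rfl
    exact hvd ((hvc'.mono (restrict_mono Set.inter_subset_right)).trans
      (Adj.reachable (G := G.restrict _) ⟨hc'e.1, hc'.2, hd⟩))
  have hec : e ≠ c := hc'e.2.2
  have hecd : e ∈ ({c, d}ᶜ : Set V) := by simp [hec, hed]
  refine (hvc'.mono (restrict_mono Set.inter_subset_left)).trans
    ((Adj.reachable (G := G.restrict _) ⟨hc'e.1, hc'.1, hecd⟩).trans ?_)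
  have hexy : e = x ∨ e = y := by
    by_contra h
    exact he ⟨hecd, by simpa using h⟩
  rcases hexy with rfl | rfl
  exacts [.rfl, hxy.symm]

lemma reachable_restrict_compl_pair_of_reachable
    (h2 : ∀ z u w, u ≠ z → w ≠ z → (G.restrict {z}ᶜ).Reachable u w) {a b : V}
    (ha : a ∈ ({x, y}ᶜ : Set V)) (hb : b ∈ ({x, y}ᶜ : Set V))
    (hab : ¬(G.restrict {x, y}ᶜ).Reachable a b) (hxy : (G.restrict {a, b}ᶜ).Reachable x y)
    {v : V} (hva : v ≠ a) (hvb : v ≠ b) : (G.restrict {a, b}ᶜ).Reachable v x := by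
  by_cases hvx : v = x
  · rw [hvx]
  by_cases hvy : v = y
  · rw [hvy]
    exact hxy.symm
  have hv : v ∈ ({x, y}ᶜ : Set V) := by simp [hvx, hvy]
  by_cases hva' : (G.restrict {x, y}ᶜ).Reachable v a
  · exact reachable_restrict_compl_pair_of_not_reachable (h2 a) ha hb hv hva
      (fun h => hab (hva'.symm.trans h)) hxy
  · rw [Set.pair_comm] at hxy ⊢
    exact reachable_restrict_compl_pair_of_not_reachable (h2 b) hb ha hv hvb hva' hxy

lemma reachable_restrict_compl_pair_of_notMem_component
    (h2 : ∀ z u w, u ≠ z → w ≠ z → (G.restrict {z}ᶜ).Reachable u w) (hxy : x ≠ y) {z a b : V}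
    (hz : z ∈ ({x, y}ᶜ : Set V)) (ha : a ∈ ({x, y}ᶜ : Set V)) (hb : b ∈ ({x, y}ᶜ : Set V))
    (hza : ¬(G.restrict {x, y}ᶜ).Reachable z a) (hzb : ¬(G.restrict {x, y}ᶜ).Reachable z b) :
    (G.restrict {a, b}ᶜ).Reachable x y := by
  refine (reachable_restrict_insert_insert_setOf_reachable h2 hxy hz).mono (restrict_mono ?_)
  rintro v (rfl | rfl | hzv) <;>
    simp only [Set.mem_compl_iff, Set.mem_insert_iff, Set.mem_singleton_iff, not_or] at ha hb ⊢
  · exact ⟨fun h => ha.1 h.symm, fun h => hb.1 h.symm⟩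
  · exact ⟨fun h => ha.2 h.symm, fun h => hb.2 h.symm⟩
  · exact ⟨by rintro rfl; exact hza hzv, by rintro rfl; exact hzb hzv⟩

end TwoCut

theorem colorable_of_colorable_restrict_of_separates {q : ℕ} {z : V} (hz : z ∈ s)
    (hsep : ∀ u v, G.Adj u v → u ∈ s → v ∉ s → u = z)
    (h₁ : (G.restrict s).Colorable q) (h₂ : (G.restrict (s \ {z})ᶜ).Colorable q) :
    G.Colorable q := by
  classical
  obtain ⟨c₁⟩ := h₁
  obtain ⟨c₂⟩ := h₂
  set σ := Equiv.swap (c₂ z) (c₁ z)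
  have hzt : z ∈ (s \ {z})ᶜ := by simp
  have hout : ∀ {v}, v ∉ s → v ∈ (s \ {z})ᶜ := fun hv => by simp [hv]
  have key : ∀ u v, G.Adj u v → u ∈ s →
      (if u ∈ s then c₁ u else σ (c₂ u)) ≠ (if v ∈ s then c₁ v else σ (c₂ v)) := by
    intro u v huv hu
    by_cases hv : v ∈ s
    · rw [if_pos hu, if_pos hv]
      exact c₁.valid ⟨huv, hu, hv⟩
    · obtain rfl := hsep u v huv hu hv
      have hσ : σ (c₂ u) = c₁ u := Equiv.swap_apply_left _ _
      rw [if_pos hu, if_neg hv, ← hσ]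
      exact σ.injective.ne (c₂.valid ⟨huv, hzt, hout hv⟩)
  refine ⟨Coloring.mk (fun v => if v ∈ s then c₁ v else σ (c₂ v)) fun {u v} huv => ?_⟩
  by_cases hu : u ∈ s
  · exact key u v huv hu
  by_cases hv : v ∈ s
  · exact (key v u huv.symm hv).symm
  rw [if_neg hu, if_neg hv]
  exact σ.injective.ne (c₂.valid ⟨huv, hout hu, hout hv⟩)

lemma update_id_ne_of_adj [DecidableEq V] {a b u v : V} (hab : ¬G.Adj a b) (huv : G.Adj u v) :
    Function.update id b a u ≠ Function.update id b a v := by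
  by_cases hu : u = b <;> by_cases hv : v = b <;>
    simp only [hu, hv, Function.update_self, ne_eq, not_false_eq_true, Function.update_of_ne,
      id] <;> subst_vars
  · exact absurd huv (G.loopless.irrefl _)
  · rintro rfl
    exact hab huv.symm
  · rintro rfl
    exact hab huv
  · exact huv.ne

lemma not_adj_map_update_id [DecidableEq V] {a b u v : V} (hab : a ≠ b) (hu : u = a ∨ u = b)
    (hv : v = a ∨ v = b) : ¬(G.map (Function.update id b a)).Adj u v := by
  have hb : ∀ w, ¬(G.map (Function.update id b a)).Adj w b := by
    rintro w ⟨-, v', w', -, -, hw'⟩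
    by_cases hw'b : w' = b
    · rw [hw'b, Function.update_self] at hw'
      exact hab hw'
    · rw [Function.update_of_ne hw'b] at hw'
      exact hw'b hw'
  rcases hv with rfl | rfl
  · rcases hu with rfl | rfl
    · exact (G.map _).loopless.irrefl _
    · exact fun h => hb _ h.symm
  · exact hb _

variable [Fintype V]

/-- Greedy colouring in decreasing order of `D`; ties are broken arbitrarily, hence the `≤`. -/
theorem colorable_of_card_filter_neighborFinset_lt {α : Type*} [LinearOrder α]
    [DecidableRel G.Adj] {q : ℕ} (D : V → α) (h : ∀ v, #{u ∈ G.neighborFinset v | D v ≤ D u} < q) :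
    G.Colorable q := by
  classical
  suffices ∀ s : Finset V, ∃ f : V → Fin q, ∀ v ∈ s, ∀ w ∈ s, G.Adj v w → f v ≠ f w by
    obtain ⟨f, hf⟩ := this univ
    exact ⟨Coloring.mk f fun hvw => hf _ (mem_univ _) _ (mem_univ _) hvw⟩
  intro s
  induction s using Finset.induction_on_min_value D with
  | empty =>
    rcases isEmpty_or_nonempty V with hV | ⟨⟨v⟩⟩
    · exact ⟨isEmptyElim, fun v => isEmptyElim v⟩
    · exact ⟨fun _ => ⟨0, (Nat.zero_le _).trans_lt (h v)⟩, by simp⟩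
  | insert a s ha hmin ih =>
    obtain ⟨f, hf⟩ := ih
    have hcard : #((s.filter (G.Adj a)).image f) < q := by
      refine card_image_le.trans_lt ((card_le_card fun u hu => ?_).trans_lt (h a))
      obtain ⟨hus, hau⟩ := mem_filter.mp hu
      exact mem_filter.mpr ⟨(mem_neighborFinset _ _ _).mpr hau, hmin u hus⟩
    obtain ⟨c, hc⟩ : ∃ c, c ∉ (s.filter (G.Adj a)).image f := by
      by_contra! hall
      have := card_le_card (fun c _ => hall c : (univ : Finset (Fin q)) ⊆ _)
      simp only [card_univ, Fintype.card_fin] at this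
      omega
    refine ⟨Function.update f a c, fun v hv' w hw' hvw => ?_⟩
    rcases mem_insert.mp hv' with rfl | hv <;> rcases mem_insert.mp hw' with rfl | hw
    · exact absurd hvw (G.loopless.irrefl _)
    · rw [Function.update_self, Function.update_of_ne (ne_of_mem_of_not_mem hw ha)]
      exact fun hcw => hc (mem_image.mpr ⟨w, mem_filter.mpr ⟨hw, hvw⟩, hcw.symm⟩)
    · rw [Function.update_self, Function.update_of_ne (ne_of_mem_of_not_mem hv ha)]
      exact fun hcv => hc (mem_image.mpr ⟨v, mem_filter.mpr ⟨hv, hvw.symm⟩, hcv⟩)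
    · rw [Function.update_of_ne (ne_of_mem_of_not_mem hv ha),
        Function.update_of_ne (ne_of_mem_of_not_mem hw ha)]
      exact hf v hv w hw hvw

lemma card_filter_neighborFinset_lt [DecidableRel G.Adj] {α : Type*} [LinearOrder α]
    (D : V → α) (huv : G.Adj v u) (hD : D u < D v) :
    #{w ∈ G.neighborFinset v | D v ≤ D w} < G.degree v := by
  classical
  rw [← card_neighborFinset_eq_degree]
  refine (card_le_card fun w hw => mem_erase.mpr ⟨?_, (mem_filter.mp hw).1⟩).trans_lt
    (card_erase_lt_of_mem ((mem_neighborFinset _ _ _).mpr huv))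
  rintro rfl
  exact (mem_filter.mp hw).2.not_gt hD

theorem colorable_of_forall_reachable_degree_lt [DecidableRel G.Adj] {q : ℕ}
    (hdeg : ∀ v, G.degree v ≤ q) (h : ∀ v, ∃ r, G.degree r < q ∧ G.Reachable v r) :
    G.Colorable q := by
  have hD : ∀ v, ∃ n r, G.degree r < q ∧ G.Reachable v r ∧ G.dist v r = n := fun v => by
    obtain ⟨r, hr, hvr⟩ := h v
    exact ⟨_, r, hr, hvr, rfl⟩
  classical
  refine colorable_of_card_filter_neighborFinset_lt (fun v => Nat.find (hD v)) fun v => ?_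
  obtain ⟨r, hr, hvr, hdist⟩ := Nat.find_spec (hD v)
  by_cases hvr' : v = r
  · subst hvr'
    exact (card_filter_le _ _).trans_lt (by rwa [card_neighborFinset_eq_degree])
  obtain ⟨u, hvu, hu⟩ := hvr.exists_adj_dist_lt hvr'
  refine (card_filter_neighborFinset_lt (fun v => Nat.find (hD v)) hvu ?_).trans_le (hdeg v)
  exact (Nat.find_le ⟨r, hr, hvu.symm.reachable.trans hvr, rfl⟩).trans_lt (hdist ▸ hu)

theorem colorable_restrict_of_separates (hconn : G.Connected) [DecidableRel G.Adj] {q : ℕ}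
    (hdeg : ∀ v, G.degree v ≤ q) {z w : V} (hz : z ∈ s) (hw : w ∉ s)
    (hsep : ∀ u v, G.Adj u v → u ∈ s → v ∉ s → u = z) :
    (G.restrict s).Colorable q := by
  classical
  have hreach : ∀ v ∈ s, (G.restrict s).Reachable v z ∧ ∃ e, G.Adj z e ∧ e ∉ s := by
    intro v hv
    obtain ⟨c, e, hvc, hc, hce, he⟩ := (hconn v w).exists_reachable_restrict_adj_notMem hv hw
    obtain rfl := hsep c e hce hc he
    exact ⟨hvc, e, hce, he⟩
  obtain ⟨-, e, hze, he⟩ := hreach z hz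
  have hzq : (G.restrict s).degree z < q := by
    refine lt_of_lt_of_le ?_ (hdeg z)
    rw [← card_neighborFinset_eq_degree, ← card_neighborFinset_eq_degree]
    refine (card_le_card fun u hu => ?_).trans_lt
      (card_erase_lt_of_mem ((mem_neighborFinset _ _ _).mpr hze))
    obtain ⟨hzu, -, hu⟩ := (mem_neighborFinset _ _ _).mp hu
    exact mem_erase.mpr ⟨by rintro rfl; exact he hu, (mem_neighborFinset _ _ _).mpr hzu⟩
  refine colorable_of_forall_reachable_degree_lt
    (fun v => (degree_le_of_le (restrict_le s)).trans (hdeg v)) fun v => ?_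
  by_cases hv : v ∈ s
  · exact ⟨z, hzq, (hreach v hv).1⟩
  · refine ⟨v, lt_of_le_of_lt ?_ hzq, .rfl⟩
    rw [← card_neighborFinset_eq_degree, card_eq_zero.mpr]
    · exact Nat.zero_le _
    · ext u
      simp [hv]

theorem colorable_of_not_reachable_restrict (hconn : G.Connected) [DecidableRel G.Adj] {q : ℕ}
    (hdeg : ∀ v, G.degree v ≤ q) {z u w : V} (hu : u ≠ z) (hw : w ≠ z)
    (huw : ¬(G.restrict {z}ᶜ).Reachable u w) : G.Colorable q := by
  set s := insert z {v | (G.restrict {z}ᶜ).Reachable u v}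
  have hsep : ∀ a b, G.Adj a b → a ∈ s → b ∉ s → a = z := by
    intro a b hab ha hb
    by_contra haz
    have hbz : b ≠ z := fun h => hb (h ▸ Set.mem_insert z _)
    exact hb (Set.mem_insert_of_mem _ (((Set.mem_insert_iff.mp ha).resolve_left haz).trans
      (Adj.reachable (G := G.restrict {z}ᶜ) ⟨hab, haz, hbz⟩)))
  have hws : w ∉ s := by
    rintro (h | h)
    exacts [hw h, huw h]
  have hus : u ∈ s \ {z} := ⟨Set.mem_insert_of_mem _ .rfl, hu⟩
  refine colorable_of_colorable_restrict_of_separates (Set.mem_insert z _) hsep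
    (colorable_restrict_of_separates hconn hdeg (Set.mem_insert z _) hws hsep)
    (colorable_restrict_of_separates hconn hdeg (fun h => h.2 rfl) (fun h => h hus) ?_)
  intro a b hab ha hb
  by_contra haz
  have hb' : b ∈ s \ {z} := not_not.mp hb
  exact hb'.2 (hsep b a hab.symm hb'.1 fun has => ha ⟨has, haz⟩)

section Merge

variable {a b : V}

lemma neighborFinset_map_update_subset [DecidableEq V] [DecidableRel G.Adj]
    [DecidableRel (G.map (Function.update id b a)).Adj] (hva : v ≠ a) :
    (G.map (Function.update id b a)).neighborFinset v ⊆
      (G.neighborFinset v).image (Function.update id b a) := by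
  intro w hw
  obtain ⟨-, v', w', hvw', hv', rfl⟩ := (mem_neighborFinset _ _ _).mp hw
  have : v' = v := by
    by_cases hv'b : v' = b
    · rw [hv'b, Function.update_self] at hv'
      exact absurd hv'.symm hva
    · rwa [Function.update_of_ne hv'b] at hv'
  subst this
  exact mem_image_of_mem _ ((mem_neighborFinset _ _ _).mpr hvw')

/-- **Lovász's trick.** Merging `b` into `a` turns a colouring of the merged graph into one of
`G` in which `a` and `b` have the same colour. There `a` is coloured first (`D = ⊤`) and the rest
greedily towards `x`, which has lost a neighbour in the merge. -/
theorem colorable_of_adj_adj_forall_reachable_restrict [DecidableRel G.Adj] {q : ℕ}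
    (hdeg : ∀ v, G.degree v ≤ q) {x : V} (hxa : G.Adj x a) (hxb : G.Adj x b)
    (hab : ¬G.Adj a b) (hne : a ≠ b)
    (hreach : ∀ w, w ≠ a → w ≠ b → (G.restrict {a, b}ᶜ).Reachable w x) :
    G.Colorable q := by
  classical
  refine Colorable.of_hom (Hom.map (Function.update id b a) G (update_id_ne_of_adj hab)) ?_
  set G' := G.map (Function.update id b a)
  set D : V → WithTop ℕ := fun v =>
    if v = a ∨ v = b then ⊤ else ((G.restrict {a, b}ᶜ).dist v x : ℕ)
  refine colorable_of_card_filter_neighborFinset_lt D fun v => ?_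
  by_cases hvab : v = a ∨ v = b
  · have hq : 0 < q := (hdeg x).trans_lt' (G.degree_pos_iff_exists_adj x |>.mpr ⟨a, hxa⟩)
    refine (card_eq_zero.mpr (filter_eq_empty_iff.mpr fun u hu hle => ?_)).trans_lt hq
    have hua : u = a ∨ u = b := by
      by_contra h
      simp [D, hvab, h] at hle
    exact not_adj_map_update_id hne hvab hua ((mem_neighborFinset _ _ _).mp hu)
  push Not at hvab
  have hdegv : #(G.neighborFinset v) ≤ q := (card_neighborFinset_eq_degree G v).trans_le (hdeg v)
  have hsub := neighborFinset_map_update_subset (G := G) (b := b) hvab.1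
  by_cases hvx : v = x
  · subst hvx
    refine (card_filter_le _ _).trans_lt ((card_le_card hsub).trans_lt
      ((card_image_lt_of_map_eq ((mem_neighborFinset _ _ _).mpr hxa)
        ((mem_neighborFinset _ _ _).mpr hxb) hne (by simp [hne])).trans_le hdegv))
  obtain ⟨u, hvu, hu⟩ := (hreach v hvab.1 hvab.2).exists_adj_dist_lt hvx
  have hua : u ≠ a ∧ u ≠ b := by simpa using hvu.2.2
  have hvu' : G'.Adj v u :=
    ⟨hvu.1.ne, v, u, hvu.1, Function.update_of_ne hvab.2 _ _, Function.update_of_ne hua.2 _ _⟩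
  refine (card_filter_neighborFinset_lt D hvu' ?_).trans_le ?_
  · simpa [D, hvab, hua] using hu
  · rw [← card_neighborFinset_eq_degree]
    exact (card_le_card hsub).trans (card_image_le.trans hdegv)

end Merge


theorem exists_adj_adj_reachable_restrict_of_not_reachable [DecidableRel G.Adj] {x y : V}
    (hdeg : ∀ v, 3 ≤ G.degree v)
    (h2 : ∀ z u w, u ≠ z → w ≠ z → (G.restrict {z}ᶜ).Reachable u w) (hxy : x ≠ y) {u w : V}
    (hu : u ∈ ({x, y}ᶜ : Set V)) (hw : w ∈ ({x, y}ᶜ : Set V))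
    (huw : ¬(G.restrict {x, y}ᶜ).Reachable u w) :
    ∃ a b, G.Adj x a ∧ G.Adj x b ∧ a ∈ ({x, y}ᶜ : Set V) ∧ b ∈ ({x, y}ᶜ : Set V) ∧
      ¬(G.restrict {x, y}ᶜ).Reachable a b ∧ (G.restrict {a, b}ᶜ).Reachable x y := by
  classical
  set S : Set V := {x, y}ᶜ
  set H := G.restrict S
  have hxyab : ∀ {a b}, a ∈ S → b ∈ S → x ∈ ({a, b}ᶜ : Set V) ∧ y ∈ ({a, b}ᶜ : Set V) := by
    intro a b ha hb
    simp only [S, Set.mem_compl_iff, Set.mem_insert_iff, Set.mem_singleton_iff, not_or] at ha hb ⊢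
    tauto
  have hout : ∀ {t b}, b ∈ S → ¬H.Reachable t b →
      b ∉ insert x (insert y {v | H.Reachable t v}) := by
    rintro t b hb htb (rfl | rfl | h)
    exacts [hb (by simp), hb (by simp), htb h]
  have hsep : ∀ {t}, H.Reachable u t → ¬H.Reachable w t := fun h h' => huw (h.trans h'.symm)
  obtain ⟨a₀, hua₀, ha₀x⟩ := exists_reachable_restrict_compl_pair_adj (h2 y) hxy hu
  obtain ⟨b₀, hwb₀, hb₀x⟩ := exists_reachable_restrict_compl_pair_adj (h2 y) hxy hw
  have ha₀ : a₀ ∈ S := hua₀.mem_of_restrict hu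
  have hb₀ : b₀ ∈ S := hwb₀.mem_of_restrict hw
  have ha₀b₀ : ¬H.Reachable a₀ b₀ := fun h => hsep (hua₀.trans h) hwb₀
  obtain ⟨Pu, hPu⟩ :=
    (reachable_restrict_insert_insert_setOf_reachable h2 hxy hu).exists_walk_length_eq_dist
  obtain ⟨Pw, hPw⟩ :=
    (reachable_restrict_insert_insert_setOf_reachable h2 hxy hw).exists_walk_length_eq_dist
  -- A shortest walk from `x` meets the neighbours of `x` only in its second vertex, so a third
  -- neighbour `z` of `x` avoids `Pu` and `Pw`.
  obtain ⟨z, hxz, hz⟩ : ∃ z ∈ G.neighborFinset x, z ∉ ({Pu.getVert 1, Pw.getVert 1} : Finset V) :=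
    exists_mem_notMem_of_card_lt_card
      (card_le_two.trans_lt (by rw [card_neighborFinset_eq_degree]; exact hdeg x))
  rw [mem_neighborFinset] at hxz
  simp only [mem_insert, mem_singleton, not_or] at hz
  by_cases hzy : z = y
  · exact ⟨a₀, b₀, ha₀x.symm, hb₀x.symm, ha₀, hb₀, ha₀b₀, Adj.reachable (G := G.restrict _)
      ⟨hzy ▸ hxz, (hxyab ha₀ hb₀).1, (hxyab ha₀ hb₀).2⟩⟩
  have hzS : z ∈ S := by simp [S, hzy, hxz.ne']
  by_cases hzu : H.Reachable u z
  · exact ⟨z, b₀, hxz, hb₀x.symm, hzS, hb₀, fun h => hsep (hzu.trans h) hwb₀,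
      reachable_restrict_compl_pair_of_length_eq_dist Pu hPu (Set.mem_insert x _) hxz
        (.inr (.inr hzu)) hz.1 (hout hb₀ fun h => hsep h hwb₀)⟩
  by_cases hzw : H.Reachable w z
  · refine ⟨a₀, z, ha₀x.symm, hxz, ha₀, hzS, fun h => hsep hua₀ (hzw.trans h.symm), ?_⟩
    rw [Set.pair_comm]
    exact reachable_restrict_compl_pair_of_length_eq_dist Pw hPw (Set.mem_insert x _) hxz
      (.inr (.inr hzw)) hz.2 (hout ha₀ (hsep hua₀))
  · exact ⟨a₀, b₀, ha₀x.symm, hb₀x.symm, ha₀, hb₀, ha₀b₀,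
      reachable_restrict_compl_pair_of_notMem_component h2 hxy hzS ha₀ hb₀
        (fun h => hzu (hua₀.trans h.symm)) (fun h => hzw (hwb₀.trans h.symm))⟩

theorem exists_adj_adj_not_adj_forall_reachable_restrict [DecidableRel G.Adj] (hconn : G.Connected)
    (hnc : G ≠ ⊤) (hdeg : ∀ v, 3 ≤ G.degree v)
    (h2 : ∀ z u w, u ≠ z → w ≠ z → (G.restrict {z}ᶜ).Reachable u w) :
    ∃ x a b, G.Adj x a ∧ G.Adj x b ∧ ¬G.Adj a b ∧ a ≠ b ∧
      ∀ v, v ≠ a → v ≠ b → (G.restrict {a, b}ᶜ).Reachable v x := by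
  by_cases h3 : ∃ x y u w : V, u ∈ ({x, y}ᶜ : Set V) ∧ w ∈ ({x, y}ᶜ : Set V) ∧
      ¬(G.restrict {x, y}ᶜ).Reachable u w
  · obtain ⟨x, y, u, w, hu, hw, huw⟩ := h3
    have hxy : x ≠ y := by
      rintro rfl
      rw [Set.pair_eq_singleton] at huw
      exact huw (h2 x u w (fun h => hu (by simp [h])) (fun h => hw (by simp [h])))
    obtain ⟨a, b, hxa, hxb, ha, hb, hab, hpath⟩ :=
      exists_adj_adj_reachable_restrict_of_not_reachable hdeg h2 hxy hu hw huw
    exact ⟨x, a, b, hxa, hxb, fun h => hab (Adj.reachable (G := G.restrict _) ⟨h, ha, hb⟩),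
      by rintro rfl; exact hab .rfl,
      fun v hva hvb => reachable_restrict_compl_pair_of_reachable h2 ha hb hab hpath hva hvb⟩
  push Not at h3
  -- `G` is 3-connected, so any induced path `a - x - b` will do
  obtain ⟨u, w, huw, hadj⟩ : ∃ u w, u ≠ w ∧ ¬G.Adj u w := by
    by_contra! h
    exact hnc (by ext u w; exact ⟨fun h' => h'.ne, h u w⟩)
  obtain ⟨p, hp⟩ := (hconn u w).exists_walk_length_eq_dist
  obtain ⟨a, x, b, hax, hxb, hab, hne⟩ :=
    p.exists_adj_adj_not_adj_ne hp ((hconn u w).one_lt_dist_of_ne_of_not_adj huw hadj)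
  exact ⟨x, a, b, hax.symm, hxb, hab, hne, fun v hva hvb =>
    h3 a b v x (by simp [hva, hvb]) (by simp [hax.ne', hxb.ne])⟩

/-- **Brooks' theorem.** -/
theorem Connected.colorable_maxDegree [DecidableRel G.Adj] (hconn : G.Connected)
    (hΔ : 3 ≤ G.maxDegree) (hnc : G ≠ ⊤) : G.Colorable G.maxDegree := by
  have hdeg := G.degree_le_maxDegree
  by_cases hreg : ∃ r, G.degree r < G.maxDegree
  · obtain ⟨r, hr⟩ := hreg
    exact colorable_of_forall_reachable_degree_lt hdeg fun v => ⟨r, hr, hconn v r⟩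
  push Not at hreg
  by_cases hcut : ∃ z u w, u ≠ z ∧ w ≠ z ∧ ¬(G.restrict {z}ᶜ).Reachable u w
  · obtain ⟨z, u, w, hu, hw, huw⟩ := hcut
    exact colorable_of_not_reachable_restrict hconn hdeg hu hw huw
  push Not at hcut
  obtain ⟨x, a, b, hxa, hxb, hab, hne, hreach⟩ :=
    exists_adj_adj_not_adj_forall_reachable_restrict hconn hnc (fun v => hΔ.trans (hreg v)) hcut
  exact colorable_of_adj_adj_forall_reachable_restrict hdeg hxa hxb hab hne hreach

variable (G) in
/-- The graph polynomial `∏_{uv ∈ E(G)} (X u - X v)`; the edge `e` is oriented as `e.out`, which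
only affects the sign. -/
noncomputable def graphPolynomial [DecidableRel G.Adj] (K : Type*) [CommRing K] :
    MvPolynomial V K :=
  ∏ e ∈ G.edgeFinset, (X e.out.1 - X e.out.2)

lemma totalDegree_graphPolynomial_le [DecidableRel G.Adj] (K : Type*) [CommRing K] :
    (G.graphPolynomial K).totalDegree ≤ #G.edgeFinset := by
  have hX : ∀ v : V, (X v : MvPolynomial V K).totalDegree ≤ 1 := fun v =>
    (totalDegree_monomial_le (Finsupp.single v 1) (1 : K)).trans (by simp)
  refine (totalDegree_finsetProd _ _).trans ((sum_le_sum fun _ _ =>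
    (totalDegree_sub _ _).trans (max_le (hX _) (hX _))).trans_eq ?_)
  simp

lemma eval_graphPolynomial_ne_zero_iff [DecidableRel G.Adj] {K : Type*} [CommRing K] [IsDomain K]
    (x : V → K) : eval x (G.graphPolynomial K) ≠ 0 ↔ ∀ v w, G.Adj v w → x v ≠ x w := by
  have hout : ∀ e : Sym2 V, s(e.out.1, e.out.2) = e := Quot.out_eq
  simp only [graphPolynomial, map_prod, map_sub, eval_X, ne_eq, prod_eq_zero_iff, sub_eq_zero,
    not_exists, not_and, mem_edgeFinset]
  constructor
  · intro h v w hvw hx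
    rcases Sym2.eq_iff.mp (hout s(v, w)) with ⟨h₁, h₂⟩ | ⟨h₁, h₂⟩
    · exact h _ hvw (by rw [h₁, h₂, hx])
    · exact h _ hvw (by rw [h₁, h₂, hx])
  · intro h e he
    rw [← hout e, mem_edgeSet] at he
    exact h _ _ he

theorem rpow_le_card_colorings_of_colorable [DecidableEq V] [DecidableRel G.Adj] {q : ℕ}
    (hq : 1 < q) (hG : G.Colorable q) :
    (q : ℝ) ^ ((Fintype.card V : ℝ) - #G.edgeFinset / (q - 1)) ≤
      #{f : V → Fin q | ∀ v w, G.Adj v w → f v ≠ f w} := by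
  obtain ⟨c⟩ := hG
  let e : Fin q ↪ ℝ := Fin.valEmbedding.trans Nat.castEmbedding
  have hproper : ∀ f : V → Fin q,
      (∀ v w, G.Adj v w → f v ≠ f w) ↔ eval (e ∘ f) (G.graphPolynomial ℝ) ≠ 0 := fun f => by
    simp [eval_graphPolynomial_ne_zero_iff, e.injective.ne_iff]
  have hq' : (0 : ℝ) < q - 1 := by
    rw [sub_pos]
    exact_mod_cast hq
  rw [filter_congr fun f _ => hproper f]
  refine le_trans (Real.rpow_le_rpow_of_exponent_le (by exact_mod_cast hq.le) ?_)
    (by simpa using weak_alon_furedi e (by simpa using hq) _ c ((hproper c).mp fun _ _ => c.valid))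
  gcongr
  exact_mod_cast totalDegree_graphPolynomial_le ℝ

lemma two_mul_card_edgeFinset_le_card_mul_maxDegree [DecidableRel G.Adj] :
    2 * #G.edgeFinset ≤ Fintype.card V * G.maxDegree := by
  rw [← sum_degrees_eq_twice_card_edges, ← smul_eq_mul, ← card_univ, ← sum_const]
  exact sum_le_sum fun v _ => G.degree_le_maxDegree v

end SimpleGraph

/-- The quantitative strengthening of Brooks' theorem from the discussion section: a
connected non-complete graph of maximum degree `Δ ≥ 3` on `n` vertices has at least
`Δ ^ (n·(Δ-2)/(2·(Δ-1)))` proper colorings with `Δ` colors. -/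
theorem card_brooks_colorings {V : Type*} [Fintype V] [DecidableEq V]
    (G : SimpleGraph V) [DecidableRel G.Adj]
    (hconn : G.Connected) (hΔ : 3 ≤ G.maxDegree) (hnc : G ≠ ⊤)
    (n : ℕ) (hn : n = Fintype.card V) :
    ((G.maxDegree : ℝ)) ^ ((n : ℝ) * ((G.maxDegree : ℝ) - 2) / (2 * ((G.maxDegree : ℝ) - 1))) ≤
      ((Finset.univ.filter fun f : V → Fin G.maxDegree =>
        ∀ v w, G.Adj v w → f v ≠ f w).card : ℝ) := by
  subst hn
  have hΔ' : (3 : ℝ) ≤ G.maxDegree := by exact_mod_cast hΔ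
  have hE : (2 * #G.edgeFinset : ℝ) ≤ Fintype.card V * G.maxDegree := by
    exact_mod_cast G.two_mul_card_edgeFinset_le_card_mul_maxDegree
  refine le_trans (Real.rpow_le_rpow_of_exponent_le (by linarith) ?_)
    (G.rpow_le_card_colorings_of_colorable (by omega) (hconn.colorable_maxDegree hΔ hnc))
  have hΔ1 : (G.maxDegree : ℝ) - 1 ≠ 0 := by linarith
  have hexp : (Fintype.card V : ℝ) - #G.edgeFinset / (G.maxDegree - 1) =
      (2 * Fintype.card V * (G.maxDegree - 1) - 2 * #G.edgeFinset) / (2 * (G.maxDegree - 1)) := by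
    field_simp
  rw [hexp]
  exact div_le_div_of_nonneg_right (by linarith) (by linarith)
end
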